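/- arXiv:1605.09179 — 6 statements merged into one kernel-verified Lean document; each statement's English description precedes it below -/
import Mathlib

section
/- For any prime p > 3, the sum over k from 0 to p-1 of binom(2k,k)^2/16^k is congruent to (-1)^((p-1)/2) modulo p^2. -/
/-!
Write `p = 2m + 1`. Multiplied by `4ᵏ k!²`, the terms `C(2k,k)² / 16ᵏ` and
`(-1)ᵏ C(m,k) C(m+k,k)` become `∏_{j<k} (2j+1)²` and `∏_{j<k} ((2j+1)² - (2m+1)²)`, which
agree modulo `p² = (2m+1)²`; for `k < p` the factor `k!` is a unit. For `m < k < p` the prime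
`p` divides `C(2k,k)`, so those terms vanish modulo `p²`. What remains is the shifted Legendre
polynomial `Pₘ` at `1`, and the symmetry `Pₘ(1 - x) = (-1)ᵐ Pₘ(x)` gives
`Pₘ(1) = (-1)ᵐ Pₘ(0) = (-1)ᵐ`.
-/

open Finset Polynomial Nat

theorem factorial_mul_centralBinom (k : ℕ) :
    k ! * k.centralBinom = 2 ^ k * ∏ j ∈ range k, (2 * j + 1) := by
  induction k with
  | zero => simp
  | succ k ih =>
    calc (k + 1)! * (k + 1).centralBinom = k ! * ((k + 1) * (k + 1).centralBinom) := by
          rw [factorial_succ]; ring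
      _ = 2 * (2 * k + 1) * (k ! * k.centralBinom) := by
          rw [succ_mul_centralBinom_succ]; ring
      _ = 2 ^ (k + 1) * ∏ j ∈ range (k + 1), (2 * j + 1) := by
          rw [ih, prod_range_succ]; ring

theorem factorial_sq_mul_choose_mul_choose (m k : ℕ) :
    ((k ! ^ 2 * m.choose k * (m + k).choose k : ℕ) : ℤ)
      = ∏ j ∈ range k, ((m - j) * (m + 1 + j) : ℤ) := by
  have hdesc : ((k ! * m.choose k : ℕ) : ℤ) = ∏ j ∈ range k, ((m : ℤ) - j) := by
    rw [← descFactorial_eq_factorial_mul_choose, ← descPochhammer_eval_eq_descFactorial,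
      descPochhammer_eval_eq_prod_range]
  have hasc : ((k ! * (m + k).choose k : ℕ) : ℤ) = ∏ j ∈ range k, ((m : ℤ) + 1 + j) := by
    rw [← ascFactorial_eq_factorial_mul_choose, ascFactorial_eq_prod_range]
    push_cast; rfl
  rw [prod_mul_distrib, ← hdesc, ← hasc]
  push_cast; ring

theorem sum_neg_one_pow_mul_choose_mul_choose (m : ℕ) :
    ∑ k ∈ range (m + 1), (-1 : ℤ) ^ k * m.choose k * (m + k).choose k = (-1) ^ m := by
  have h := shiftedLegendre_eval_symm m (1 : ℤ)
  rw [sub_self, ← coeff_zero_eq_aeval_zero, coeff_shiftedLegendre, aeval_eq_sum_range] at h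
  simp only [coeff_shiftedLegendre, natDegree_shiftedLegendre, Algebra.smul_def, one_pow, mul_one,
    algebraMap_int_eq, eq_intCast, Int.cast_id, pow_zero, choose_zero_right, add_zero, choose_self,
    cast_one] at h
  rw [← h]
  exact sum_congr rfl fun k _ => by rw [choose_symm_add]

theorem centralBinom_sq_eq_of_sq_eq_zero {R : Type*} [CommRing R] {m k : ℕ}
    (hm : (2 * m + 1 : R) ^ 2 = 0) (hk : IsUnit (k ! : R)) :
    (k.centralBinom : R) ^ 2 = 16 ^ k * ((-1) ^ k * m.choose k * (m + k).choose k) := by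
  have hcb := congrArg (Nat.cast : ℕ → R) (factorial_mul_centralBinom k)
  have hchoose := congrArg (Int.cast : ℤ → R) (factorial_sq_mul_choose_mul_choose m k)
  push_cast at hcb hchoose
  have hfactor (j : ℕ) : (2 * j + 1 : R) ^ 2 = -4 * ((m - j) * (m + 1 + j)) := by
    linear_combination hm
  apply (hk.pow 2).mul_left_cancel
  calc (k ! : R) ^ 2 * k.centralBinom ^ 2 = 4 ^ k * ∏ j ∈ range k, (2 * j + 1 : R) ^ 2 := by
        rw [← mul_pow, hcb, mul_pow, pow_right_comm, prod_pow]; norm_num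
    _ = 4 ^ k * (-4) ^ k * ∏ j ∈ range k, ((m - j) * (m + 1 + j) : R) := by
        simp_rw [hfactor, prod_mul_distrib, prod_const, card_range, mul_assoc]
    _ = (k ! : R) ^ 2 * (16 ^ k * ((-1) ^ k * m.choose k * (m + k).choose k)) := by
        rw [← hchoose, neg_pow, show (16 : R) = 4 * 4 by norm_num, mul_pow]; ring

theorem centralBinom_sq_cast_eq_zero {p k : ℕ} (hp : p.Prime) (hk : k < p) (hpk : p ≤ 2 * k) :
    (k.centralBinom : ZMod (p ^ 2)) ^ 2 = 0 := by
  obtain ⟨c, hc⟩ := hp.dvd_choose_add hk hk (by omega)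
  rw [centralBinom_eq_two_mul_choose, two_mul, hc, cast_mul, mul_pow,
    ← cast_pow, ZMod.natCast_self, zero_mul]

theorem centralBinom_sq_mul_inv_sixteen_pow {p m k : ℕ} (hp : p.Prime) (hm : p = 2 * m + 1)
    (hk : k < p) :
    (k.centralBinom : ZMod (p ^ 2)) ^ 2 * ((16 : ZMod (p ^ 2)) ^ k)⁻¹
      = (-1) ^ k * m.choose k * (m + k).choose k := by
  have hp2 : (2 * m + 1 : ZMod (p ^ 2)) ^ 2 = 0 := by
    rw [show (2 * m + 1 : ZMod (p ^ 2)) = p by rw [hm]; push_cast; rfl]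
    exact_mod_cast ZMod.natCast_self (p ^ 2)
  have h2 : IsUnit (2 : ZMod (p ^ 2)) := by
    exact_mod_cast (ZMod.isUnit_natCast_iff_not_dvd_pow hp two_pos).2 fun h => by
      have := Nat.le_of_dvd two_pos h; have := hp.two_le; omega
  have h16 : IsUnit ((16 : ZMod (p ^ 2)) ^ k) := by
    rw [show (16 : ZMod (p ^ 2)) = 2 ^ 4 by norm_num]; exact (h2.pow 4).pow k
  have hfact : IsUnit (k ! : ZMod (p ^ 2)) :=
    (ZMod.isUnit_natCast_iff_not_dvd_pow hp two_pos).2 fun h => by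
      have := hp.dvd_factorial.1 h; omega
  rw [centralBinom_sq_eq_of_sq_eq_zero hp2 hfact, mul_comm, ← mul_assoc, ZMod.inv_mul_of_unit _ h16,
    one_mul]

theorem sum_central_binom_sq (p : ℕ) (hp : p.Prime) (h3 : 3 < p) :
    ∑ k ∈ Finset.range p,
        ((Nat.choose (2*k) k : ZMod (p^2))^2 * ((16 : ZMod (p^2))^k)⁻¹)
      = (-1)^((p-1)/2) := by
  obtain ⟨m, hm⟩ := hp.odd_of_ne_two (by omega)
  simp_rw [← centralBinom_eq_two_mul_choose]
  have hsum := congrArg (Int.cast : ℤ → ZMod (p ^ 2)) (sum_neg_one_pow_mul_choose_mul_choose m)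
  push_cast at hsum
  rw [← sum_subset (range_mono (by omega : m + 1 ≤ p)),
    sum_congr rfl fun k hk => centralBinom_sq_mul_inv_sixteen_pow hp hm (by have := mem_range.1 hk; omega),
    hsum]
  · congr 1; omega
  · intro k hk hkm
    simp only [mem_range] at hk hkm
    rw [centralBinom_sq_cast_eq_zero hp hk (by omega), zero_mul]
end

section
/- For any prime p > 3, the sum over k from 0 to p-1 of binom(2k,k)·binom(3k,k)/27^k is congruent to the Legendre symbol (-3/p) modulo p^2. -/
/-!
If `3a ≡ -1 (mod p²)` then `C(2k,k) C(3k,k) / 27^k ≡ (-1)^k C(a,k) C(a+k,k)`, so the sum is the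
value at `a` of `g(x) = ∑_{k<p} (-1)^k C(x,k) C(x+k,k)`; we work with the integral polynomial
`F = (p-1)!² g`. It satisfies `F(x+1) + F(x) = 2 ∏_{i<p-1} (x-i)(x+i+2)`, whence
`F(m) = (-1)^m (p-1)!²` for `0 ≤ m ≤ p-1`. Modulo `p` the right-hand side is
`2 ∏_{i<p-1} (x-i)²`, so differentiating gives `F'(m+1) ≡ -F'(m)`; combined with the
symmetry `F(-1-x) = F(x)` this forces `F' ≡ 0` on `𝔽_p`. Writing `a = b + pc` with `0 ≤ b < p`, Taylor expansion gives
`F(a) ≡ F(b) = (-1)^b (p-1)!² (mod p²)`, and the parity of `b` is decided by `p mod 3`.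
-/

open Finset Polynomial
open scoped Nat

lemma Polynomial.sq_dvd_eval_add_mul_sub_eval {R : Type*} [CommRing R] (f : R[X]) {d x : R}
    (h : d ∣ (derivative f).eval x) (y : R) : d ^ 2 ∣ f.eval (x + d * y) - f.eval x := by
  obtain ⟨k, hk⟩ := binomExpansion f x (d * y)
  obtain ⟨e, he⟩ := h
  exact ⟨e * y + k * y ^ 2, by rw [hk, he]; ring⟩

lemma eq_neg_one_pow_mul_of_succ_add_eq_zero {R : Type*} [Ring R] {f : ℕ → R} {n : ℕ}
    (h : ∀ m < n, f (m + 1) + f m = 0) : ∀ m ≤ n, f m = (-1) ^ m * f 0 := by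
  intro m hm
  induction m with
  | zero => simp
  | succ m ih =>
    rw [eq_neg_of_add_eq_zero_left (h m hm), ih (by omega), pow_succ, mul_neg_one, neg_mul]

section Identities

variable (R : Type*) [CommRing R]

noncomputable def descAscProd (s k : ℕ) : R[X] :=
  ∏ i ∈ range k, (X - (i : R[X])) * (X + ((i + s : ℕ) : R[X]))

/-- `n!² ∑_{k ≤ n} (-1)^k C(X,k) C(X+k,k)`, as `k!² C(X,k) C(X+k,k) = descAscProd R 1 k`. -/
noncomputable def binomSumPoly (n : ℕ) : R[X] :=
  ∑ k ∈ range (n + 1), C ((-1) ^ k * ((n ! / k ! : ℕ) : R) ^ 2) * descAscProd R 1 k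

variable {R}

lemma descAscProd_succ (s n : ℕ) :
    descAscProd R s (n + 1) =
      descAscProd R s n * ((X - (n : R[X])) * (X + ((n + s : ℕ) : R[X]))) :=
  prod_range_succ _ _

lemma descAscProd_one_succ (n : ℕ) :
    descAscProd R 1 (n + 1) = (X - (n : R[X])) * (X + 1) * descAscProd R 2 n := by
  simp only [descAscProd, prod_mul_distrib]
  rw [prod_range_succ, prod_range_succ' (fun i => X + ((i + 1 : ℕ) : R[X]))]
  push_cast
  simp only [add_assoc, one_add_one_eq_two]
  ring

lemma descAscProd_one_succ_comp (n : ℕ) :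
    (descAscProd R 1 (n + 1)).comp (X + 1) =
      (X + 1) * (X + ((n + 2 : ℕ) : R[X])) * descAscProd R 2 n := by
  simp only [descAscProd, prod_mul_distrib, Polynomial.prod_comp, mul_comp, sub_comp, add_comp,
    X_comp, natCast_comp]
  rw [prod_range_succ' (fun i => X + 1 - ((i : ℕ) : R[X])), prod_range_succ]
  push_cast
  ring_nf

lemma descAscProd_one_comp_neg_X_sub_one (k : ℕ) :
    (descAscProd R 1 k).comp (-X - 1) = descAscProd R 1 k := by
  simp only [descAscProd, Polynomial.prod_comp, mul_comp, sub_comp, add_comp, X_comp,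
    natCast_comp]
  refine prod_congr rfl fun i _ => ?_
  push_cast
  ring

lemma descAscProd_eval_natCast {s k m : ℕ} (hm : m < k) :
    (descAscProd R s k).eval (m : R) = 0 := by
  rw [descAscProd, eval_prod]
  exact prod_eq_zero (mem_range.2 hm) (by simp)

lemma binomSumPoly_succ (n : ℕ) :
    binomSumPoly R (n + 1) =
      C (((n + 1 : ℕ) : R) ^ 2) * binomSumPoly R n +
        C ((-1) ^ (n + 1)) * descAscProd R 1 (n + 1) := by
  rw [binomSumPoly, sum_range_succ, binomSumPoly, mul_sum, Nat.div_self (Nat.factorial_pos _)]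
  congr 1
  · refine sum_congr rfl fun k hk => ?_
    rw [Nat.factorial_succ,
      Nat.mul_div_assoc _ (Nat.factorial_dvd_factorial (mem_range_succ_iff.1 hk))]
    simp only [← mul_assoc, ← C_mul]
    push_cast
    ring_nf
  · simp

lemma binomSumPoly_comp_X_add_one_add (n : ℕ) :
    (binomSumPoly R n).comp (X + 1) + binomSumPoly R n =
      C (2 * (-1) ^ n) * descAscProd R 2 n := by
  induction n with
  | zero => simp [binomSumPoly, descAscProd, C_ofNat, one_add_one_eq_two]
  | succ n ih =>
    have hsplit : (binomSumPoly R (n + 1)).comp (X + 1) + binomSumPoly R (n + 1) =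
        C (((n + 1 : ℕ) : R) ^ 2) * ((binomSumPoly R n).comp (X + 1) + binomSumPoly R n) +
          C ((-1) ^ (n + 1)) *
            ((descAscProd R 1 (n + 1)).comp (X + 1) + descAscProd R 1 (n + 1)) := by
      simp only [binomSumPoly_succ, add_comp, mul_comp, C_comp]
      ring
    rw [hsplit, ih, descAscProd_one_succ_comp, descAscProd_one_succ, descAscProd_succ]
    simp only [map_mul, map_pow, map_neg, map_one, map_natCast, C_ofNat]
    push_cast
    ring

lemma binomSumPoly_comp_neg_X_sub_one (n : ℕ) :
    (binomSumPoly R n).comp (-X - 1) = binomSumPoly R n := by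
  simp only [binomSumPoly, Polynomial.sum_comp, mul_comp, C_comp,
    descAscProd_one_comp_neg_X_sub_one]

lemma binomSumPoly_eval_zero (n : ℕ) : (binomSumPoly R n).eval 0 = (n ! : R) ^ 2 := by
  rw [binomSumPoly, eval_finsetSum, sum_eq_single_of_mem 0 (mem_range.2 n.succ_pos)]
  · simp [descAscProd]
  · intro k _ hk
    have h := descAscProd_eval_natCast (R := R) (s := 1) (m := 0) (Nat.pos_of_ne_zero hk)
    rw [Nat.cast_zero] at h
    rw [eval_mul, h, mul_zero]

lemma binomSumPoly_eval_natCast {n m : ℕ} (hm : m ≤ n) :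
    (binomSumPoly R n).eval (m : R) = (-1) ^ m * (n ! : R) ^ 2 := by
  have hshift : ∀ j < n,
      (binomSumPoly R n).eval ((j + 1 : ℕ) : R) + (binomSumPoly R n).eval (j : R) = 0 := by
    intro j hj
    have h := congrArg (eval (j : R)) (binomSumPoly_comp_X_add_one_add (R := R) n)
    rwa [eval_add, eval_comp, eval_mul, descAscProd_eval_natCast hj, mul_zero, eval_add, eval_X,
      eval_one, ← Nat.cast_succ] at h
  rw [eq_neg_one_pow_mul_of_succ_add_eq_zero (f := fun j : ℕ => (binomSumPoly R n).eval (j : R))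
    hshift m hm, Nat.cast_zero, binomSumPoly_eval_zero]

lemma map_binomSumPoly {S : Type*} [CommRing S] (f : R →+* S) (n : ℕ) :
    (binomSumPoly R n).map f = binomSumPoly S n := by
  simp [binomSumPoly, descAscProd, Polynomial.map_sum, Polynomial.map_prod]

lemma derivative_binomSumPoly_comp_X_add_one_add (n : ℕ) :
    (derivative (binomSumPoly R n)).comp (X + 1) + derivative (binomSumPoly R n) =
      C (2 * (-1) ^ n) * derivative (descAscProd R 2 n) := by
  have h := congrArg derivative (binomSumPoly_comp_X_add_one_add (R := R) n)
  rwa [derivative_add, derivative_comp, derivative_C_mul, derivative_add, derivative_X,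
    derivative_one, add_zero, one_mul] at h

lemma derivative_binomSumPoly_comp_neg_X_sub_one (n : ℕ) :
    (derivative (binomSumPoly R n)).comp (-X - 1) = -derivative (binomSumPoly R n) := by
  have h := congrArg derivative (binomSumPoly_comp_neg_X_sub_one (R := R) n)
  simp only [derivative_comp, derivative_sub, derivative_neg, derivative_X, derivative_one,
    sub_zero, neg_mul, one_mul] at h
  linear_combination -h

end Identities

lemma Nat.choose_mul_choose_mul_factorial_pow_three (k : ℕ) :
    (2 * k).choose k * (3 * k).choose k * k ! ^ 3 = (3 * k)! := by
  have h2 := Nat.choose_mul_factorial_mul_factorial (show k ≤ 2 * k by omega)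
  have h3 := Nat.choose_mul_factorial_mul_factorial (show k ≤ 3 * k by omega)
  rw [show 2 * k - k = k by omega] at h2
  rw [show 3 * k - k = 2 * k by omega, ← h2] at h3
  rw [← h3]
  ring

lemma Nat.choose_mul_choose_mul_factorial_sq_succ (k : ℕ) :
    (2 * (k + 1)).choose (k + 1) * (3 * (k + 1)).choose (k + 1) * (k + 1)! ^ 2 =
      3 * (3 * k + 1) * (3 * k + 2) * ((2 * k).choose k * (3 * k).choose k * k ! ^ 2) := by
  apply Nat.eq_of_mul_eq_mul_right (Nat.factorial_pos (k + 1))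
  have hcube := Nat.choose_mul_choose_mul_factorial_pow_three
  calc _ = (3 * (k + 1))! := by rw [← hcube]; ring
    _ = (3 * k + 3) * (3 * k + 2) * (3 * k + 1) * (3 * k)! := by
      rw [show 3 * (k + 1) = 3 * k + 2 + 1 by ring, Nat.factorial_succ, Nat.factorial_succ,
        Nat.factorial_succ]
      ring
    _ = _ := by rw [← hcube, Nat.factorial_succ]; ring

lemma natCast_choose_mul_choose_mul_factorial_sq {R : Type*} [CommRing R] {a : R}
    (ha : 3 * a + 1 = 0) (k : ℕ) :
    (((2 * k).choose k * (3 * k).choose k * k ! ^ 2 : ℕ) : R) =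
      (-27) ^ k * (descAscProd R 1 k).eval a := by
  induction k with
  | zero => simp [descAscProd]
  | succ k ih =>
    rw [Nat.choose_mul_choose_mul_factorial_sq_succ, Nat.cast_mul, ih, descAscProd_succ]
    simp only [eval_mul, eval_sub, eval_add, eval_X, eval_natCast]
    push_cast
    -- `3(3k+1)(3k+2) = -27 (a-k)(a+k+1)` termwise, as `3k+1 = -3(a-k)` and `3k+2 = 3(a+k+1)`
    linear_combination ((9 * a + 6) * (-27) ^ k * (descAscProd R 1 k).eval a) * ha

lemma sum_choose_mul_choose_mul_inv_mul_factorial_sq {N : ℕ} {a : ZMod N}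
    (ha : 3 * a + 1 = 0) (n : ℕ) :
    (∑ k ∈ range (n + 1), (Nat.choose (2 * k) k : ZMod N) * (Nat.choose (3 * k) k : ZMod N) *
      ((27 : ZMod N) ^ k)⁻¹) * (n ! : ZMod N) ^ 2 = (binomSumPoly (ZMod N) n).eval a := by
  have h27 : IsUnit (27 : ZMod N) := by
    have h3 : IsUnit (3 : ZMod N) := IsUnit.of_mul_eq_one (-a) (by linear_combination -ha)
    simpa [show (27 : ZMod N) = 3 ^ 3 by norm_num] using h3.pow 3
  rw [sum_mul, binomSumPoly, eval_finsetSum]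
  refine sum_congr rfl fun k hk => ?_
  have hfact : (n ! : ZMod N) = k ! * (n ! / k ! : ℕ) := by
    rw [← Nat.cast_mul,
      Nat.mul_div_cancel' (Nat.factorial_dvd_factorial (mem_range_succ_iff.1 hk))]
  have hterm := natCast_choose_mul_choose_mul_factorial_sq ha k
  push_cast at hterm
  rw [neg_pow] at hterm
  rw [eval_mul, eval_C, hfact]
  linear_combination (((n ! / k ! : ℕ) : ZMod N) ^ 2 * ((27 : ZMod N) ^ k)⁻¹) * hterm
    + ((-1) ^ k * ((n ! / k ! : ℕ) : ZMod N) ^ 2 * (descAscProd (ZMod N) 1 k).eval a) *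
      ZMod.mul_inv_of_unit _ (h27.pow k)

section ModPrime

variable {p : ℕ} [Fact p.Prime]

lemma sq_X_sub_C_dvd_descAscProd_two {m : ℕ} (hm : m < p - 1) :
    (X - C (m : ZMod p)) ^ 2 ∣ descAscProd (ZMod p) 2 (p - 1) := by
  rw [descAscProd, prod_mul_distrib, sq]
  refine mul_dvd_mul ?_ ?_
  · simpa using dvd_prod_of_mem (fun i : ℕ => X - (i : (ZMod p)[X])) (mem_range.2 hm)
  · have hfactor : X + ((p - 2 - m + 2 : ℕ) : (ZMod p)[X]) = X - C (m : ZMod p) := by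
      rw [show p - 2 - m + 2 = p - m by omega, Nat.cast_sub (by omega), ← C_eq_natCast,
        ← C_eq_natCast, ZMod.natCast_self]
      simp [sub_eq_add_neg]
    rw [← hfactor]
    exact dvd_prod_of_mem (fun i : ℕ => X + ((i + 2 : ℕ) : (ZMod p)[X]))
      (mem_range.2 (by omega))

lemma eval_derivative_descAscProd_two {m : ℕ} (hm : m < p - 1) :
    (derivative (descAscProd (ZMod p) 2 (p - 1))).eval (m : ZMod p) = 0 := by
  obtain ⟨q, hq⟩ := pow_sub_one_dvd_derivative_of_pow_dvd (sq_X_sub_C_dvd_descAscProd_two hm)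
  simp [hq]

lemma eval_derivative_binomSumPoly_eq_zero (hp : p ≠ 2) (x : ZMod p) :
    (derivative (binomSumPoly (ZMod p) (p - 1))).eval x = 0 := by
  set D := derivative (binomSumPoly (ZMod p) (p - 1))
  have hshift : ∀ m < p - 1, D.eval ((m + 1 : ℕ) : ZMod p) + D.eval (m : ZMod p) = 0 := by
    intro m hm
    have h := congrArg (eval (m : ZMod p))
      (derivative_binomSumPoly_comp_X_add_one_add (R := ZMod p) (p - 1))
    rwa [eval_add, eval_comp, eval_mul, eval_derivative_descAscProd_two hm, mul_zero, eval_add,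
      eval_X, eval_one, ← Nat.cast_succ] at h
  have halt := eq_neg_one_pow_mul_of_succ_add_eq_zero (f := fun m : ℕ => D.eval (m : ZMod p))
    hshift
  have hsymm : D.eval (-1) = -D.eval 0 := by
    simpa using congrArg (eval 0)
      (derivative_binomSumPoly_comp_neg_X_sub_one (R := ZMod p) (p - 1))
  -- `p - 1 = -1` in `ZMod p`, so alternation and symmetry give `D 0 = D (-1) = -D 0`
  have hzero : D.eval 0 = 0 := by
    have h := halt (p - 1) le_rfl
    rw [Nat.cast_sub (Fact.out : p.Prime).one_le, ZMod.natCast_self, zero_sub, Nat.cast_one,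
      hsymm, ((Fact.out : p.Prime).even_sub_one hp).neg_one_pow, one_mul, Nat.cast_zero] at h
    have h2 : (2 : ZMod p) * D.eval 0 = 0 := by linear_combination -h
    exact (mul_eq_zero.1 h2).resolve_left (Ring.two_ne_zero (by rwa [ZMod.ringChar_zmod_n]))
  rw [← ZMod.natCast_zmod_val x]
  simpa [hzero] using halt x.val (by have := ZMod.val_lt x; omega)

lemma prime_dvd_eval_derivative_binomSumPoly (hp : p ≠ 2) (z : ℤ) :
    (p : ℤ) ∣ (derivative (binomSumPoly ℤ (p - 1))).eval z := by
  have h := eval_intCast_map (Int.castRingHom (ZMod p)) (derivative (binomSumPoly ℤ (p - 1))) z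
  rw [← derivative_map, map_binomSumPoly, eval_derivative_binomSumPoly_eq_zero hp, Int.cast_id,
    eq_intCast] at h
  exact (ZMod.intCast_zmod_eq_zero_iff_dvd _ _).1 h.symm

lemma binomSumPoly_eval_add_prime_mul (hp : p ≠ 2) (x y : ZMod (p ^ 2)) :
    (binomSumPoly (ZMod (p ^ 2)) (p - 1)).eval (x + (p : ZMod (p ^ 2)) * y) =
      (binomSumPoly (ZMod (p ^ 2)) (p - 1)).eval x := by
  have hdvd :
      (p : ZMod (p ^ 2)) ∣ (derivative (binomSumPoly (ZMod (p ^ 2)) (p - 1))).eval x := by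
    rw [← ZMod.intCast_zmod_cast x, ← map_binomSumPoly (Int.castRingHom _), derivative_map,
      eval_intCast_map]
    simpa using _root_.map_dvd (Int.castRingHom (ZMod (p ^ 2)))
      (prime_dvd_eval_derivative_binomSumPoly hp (ZMod.cast x))
  have h := sq_dvd_eval_add_mul_sub_eval _ hdvd y
  rwa [← Nat.cast_pow, ZMod.natCast_self, zero_dvd_iff, sub_eq_zero] at h

lemma legendreSym_neg_three (hp : p ≠ 2) : legendreSym p (-3) = legendreSym 3 p := by
  have : Fact (Nat.Prime 3) := ⟨Nat.prime_three⟩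
  have hodd : p % 2 = 1 := Nat.odd_iff.1 ((Fact.out : p.Prime).odd_of_ne_two hp)
  have hrec := legendreSym.quadratic_reciprocity' (p := 3) (q := p) (by norm_num) hp
  rw [Nat.cast_ofNat, show 3 / 2 * (p / 2) = p / 2 by omega] at hrec
  rw [show (-3 : ℤ) = -1 * 3 by norm_num, legendreSym.mul, legendreSym.at_neg_one hp,
    ZMod.χ₄_eq_neg_one_pow hodd, hrec, ← mul_assoc, ← pow_add, Even.neg_one_pow ⟨p / 2, rfl⟩,
    one_mul]

lemma exists_digits_legendreSym_neg_three (h3 : 3 < p) :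
    ∃ b c : ℕ, b < p ∧ 3 * (b + p * c) + 1 = p ^ 2 ∧ legendreSym p (-3) = (-1) ^ b := by
  have hodd : p % 2 = 1 := Nat.odd_iff.1 ((Fact.out : p.Prime).odd_of_ne_two (by omega))
  have : Fact (Nat.Prime 3) := ⟨Nat.prime_three⟩
  rw [legendreSym_neg_three (by omega), legendreSym.mod]
  have h3p : ¬ 3 ∣ p := fun h => by
    have := (Nat.prime_dvd_prime_iff_eq Nat.prime_three Fact.out).1 h; omega
  obtain ⟨q, hq | hq⟩ : ∃ q, p = 3 * q + 1 ∨ p = 3 * q + 2 := ⟨p / 3, by omega⟩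
  · refine ⟨q, q, by omega, by subst hq; ring, ?_⟩
    rw [hq, (Nat.even_iff.2 (by omega)).neg_one_pow]
    norm_num
  · refine ⟨2 * q + 1, q, by omega, by subst hq; ring, ?_⟩
    rw [hq, (odd_two_mul_add_one q).neg_one_pow]
    norm_num

end ModPrime

theorem sum_binom_2k_3k (p : ℕ) [Fact p.Prime] (h3 : 3 < p) :
    ∑ k ∈ Finset.range p,
        ((Nat.choose (2*k) k : ZMod (p^2)) * (Nat.choose (3*k) k : ZMod (p^2))
          * ((27 : ZMod (p^2))^k)⁻¹)
      = (legendreSym p (-3) : ZMod (p^2)) := by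
  obtain ⟨b, c, hb, hbc, hleg⟩ := exists_digits_legendreSym_neg_three h3
  have hp : p.Prime := Fact.out
  have ha : 3 * ((b + p * c : ℕ) : ZMod (p ^ 2)) + 1 = 0 := by
    have h : ((3 * (b + p * c) + 1 : ℕ) : ZMod (p ^ 2)) = 0 := by
      rw [hbc, ZMod.natCast_self]
    exact_mod_cast h
  have hunit : IsUnit (((p - 1)! : ZMod (p ^ 2)) ^ 2) := by
    refine ((ZMod.isUnit_iff_coprime _ _).2 (Nat.Coprime.pow_right 2 ?_)).pow 2
    exact Nat.coprime_comm.1 (hp.coprime_iff_not_dvd.2 (by rw [hp.dvd_factorial]; omega))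
  have hrange : range p = range (p - 1 + 1) := by rw [Nat.sub_add_cancel hp.one_le]
  apply hunit.mul_right_cancel
  rw [hrange, sum_choose_mul_choose_mul_inv_mul_factorial_sq ha, Nat.cast_add, Nat.cast_mul,
    binomSumPoly_eval_add_prime_mul (by omega), binomSumPoly_eval_natCast (by omega), hleg]
  push_cast
  ring
end

section
/- For any prime p > 3, the sum over k from 0 to p-1 of binom(2k,k)·binom(4k,2k)/64^k is congruent to the Legendre symbol (-2/p) modulo p^2. -/
/-!
In `ZMod (p ^ 2)` the summand is `C(x, k) C(y, k)` with `x = -1/4`, `y = -3/4`.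
Take naturals `a, b < p` with `a ≡ x`, `b ≡ y (mod p)`, so `a + b = p - 1`, and write
`x = a + s p`, `y = b + t p`; then `s + t = -1`. Since `p ^ 2 = 0`, the truncated sum
`F x y = ∑_{k < p} C(x, k) C(y, k)` is affine in `s` and `t`, and at natural arguments
Vandermonde gives `F a b = C(p - 1, b)` and `F (a + p) b = C(2p - 1, b)`. Taylor expansion of
`C(·, b)` at `-1` gives `C(2p - 1, b) - C(p - 1, b) = C(p - 1, b) - (-1) ^ b`, and likewise for
`a`; as `s + t = -1`, everything collapses to `(-1) ^ b`, which is `(-2 / p)` by the choice of `b`.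
-/
open Finset Polynomial Nat

theorem factorial_four_mul (k : ℕ) :
    (4 * k)! = 4 ^ k * (2 * k)! * ∏ j ∈ range k, (4 * j + 1) * (4 * j + 3) := by
  induction k with
  | zero => simp
  | succ k ih =>
    rw [show 4 * (k + 1) = 4 * k + 3 + 1 by ring, show 2 * (k + 1) = 2 * k + 1 + 1 by ring]
    simp only [factorial_succ, ih, prod_range_succ, pow_succ]
    ring

theorem choose_mul_choose_mul_factorial_sq (k : ℕ) :
    (2 * k).choose k * (4 * k).choose (2 * k) * k ! ^ 2 =
      4 ^ k * ∏ j ∈ range k, (4 * j + 1) * (4 * j + 3) := by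
  have h2k : (2 * k).choose k * k ! * k ! = (2 * k)! := by
    simpa [two_mul] using choose_mul_factorial_mul_factorial (le_add_right k k)
  have h4k : (4 * k).choose (2 * k) * (2 * k)! * (2 * k)! = (4 * k)! := by
    simpa [show 4 * k - 2 * k = 2 * k by omega] using
      choose_mul_factorial_mul_factorial (show 2 * k ≤ 4 * k by omega)
  apply Nat.eq_of_mul_eq_mul_left (factorial_pos (2 * k))
  calc (2 * k)! * ((2 * k).choose k * (4 * k).choose (2 * k) * k ! ^ 2)
      = (4 * k).choose (2 * k) * (2 * k)! * ((2 * k).choose k * k ! * k !) := by ring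
    _ = (2 * k)! * (4 ^ k * ∏ j ∈ range k, (4 * j + 1) * (4 * j + 3)) := by
      rw [h2k, h4k, factorial_four_mul]; ring

theorem descPochhammer_eval_neg_one (R : Type*) [CommRing R] (k : ℕ) :
    (descPochhammer R k).eval (-1) = (-1) ^ k * k ! := by
  have h := ascPochhammer_eval_neg_eq_descPochhammer R (-1) k
  rw [neg_neg, ascPochhammer_eval_one] at h
  rw [h, ← mul_assoc, ← mul_pow, neg_one_mul, neg_neg, one_pow, one_mul]

theorem sixty_four_pow_mul_descPochhammer_eval_mul_eval {R : Type*} [CommRing R] {x y : R}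
    (hx : 4 * x = -1) (hy : 4 * y = -3) (k : ℕ) :
    64 ^ k * ((descPochhammer R k).eval x * (descPochhammer R k).eval y) =
      (2 * k).choose k * (4 * k).choose (2 * k) * (k ! : R) ^ 2 := by
  have hprod : 16 ^ k * ((descPochhammer R k).eval x * (descPochhammer R k).eval y) =
      ∏ j ∈ range k, ((4 * j + 1) * (4 * j + 3) : R) := by
    calc 16 ^ k * ((descPochhammer R k).eval x * (descPochhammer R k).eval y)
        = ∏ j ∈ range k, 16 * ((x - j) * (y - j)) := by
          rw [descPochhammer_eval_eq_prod_range, descPochhammer_eval_eq_prod_range,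
            prod_mul_distrib, prod_mul_distrib, prod_const, card_range]
      _ = ∏ j ∈ range k, ((4 * j + 1) * (4 * j + 3) : R) := prod_congr rfl fun j _ => by
          linear_combination (4 * y - 4 * j) * hx + (-1 - 4 * j) * hy
  rw [show (64 : R) ^ k = 4 ^ k * 16 ^ k by rw [← mul_pow]; norm_num, mul_assoc, hprod]
  exact_mod_cast congrArg (Nat.cast : ℕ → R) (choose_mul_choose_mul_factorial_sq k).symm

theorem exists_sum_eval_mul_eval_add_mul {R ι : Type*} [CommRing R] {ε : R} (hε : ε ^ 2 = 0)
    (I : Finset ι) (P Q : ι → R[X]) (x y : R) :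
    ∃ u v : R, ∀ s t : R, ∑ i ∈ I, (P i).eval (x + s * ε) * (Q i).eval (y + t * ε) =
      ∑ i ∈ I, (P i).eval x * (Q i).eval y + s * u + t * v := by
  refine ⟨∑ i ∈ I, ε * ((P i).derivative.eval x * (Q i).eval y),
    ∑ i ∈ I, ε * ((P i).eval x * (Q i).derivative.eval y), fun s t => ?_⟩
  rw [mul_sum, mul_sum, ← sum_add_distrib, ← sum_add_distrib]
  refine sum_congr rfl fun i _ => ?_
  have hsq : ∀ r : R, (r * ε) ^ 2 = 0 := fun r => by rw [mul_pow, hε, mul_zero]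
  rw [eval_add_of_sq_eq_zero _ _ _ (hsq s), eval_add_of_sq_eq_zero _ _ _ (hsq t)]
  linear_combination s * t * (P i).derivative.eval x * (Q i).derivative.eval y * hε

theorem sum_range_choose_mul_choose {m n N : ℕ} (hn : n < N) :
    ∑ k ∈ range N, m.choose k * n.choose k = (m + n).choose n := by
  rw [← sum_subset (range_subset_range.mpr hn) fun k _ hk => by
      rw [choose_eq_zero_of_lt (n := n) (by simpa using hk), mul_zero],
    add_choose_eq, Nat.sum_antidiagonal_eq_sum_range_succ_mk]
  exact sum_congr rfl fun k hk => by rw [choose_symm (mem_range_succ_iff.mp hk)]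

section ModPrimeSq

variable (p : ℕ)

theorem natCast_sq_eq_zero : (p : ZMod (p ^ 2)) ^ 2 = 0 := by
  rw [← Nat.cast_pow, ZMod.natCast_self]

/-- `x ↦ (x choose k)` over `ZMod (p ^ 2)`; only meaningful for `k < p`, where `k!` is a unit. -/
noncomputable def binomPoly (k : ℕ) : (ZMod (p ^ 2))[X] :=
  C (k ! : ZMod (p ^ 2))⁻¹ * descPochhammer (ZMod (p ^ 2)) k

noncomputable def binomSum (x y : ZMod (p ^ 2)) : ZMod (p ^ 2) :=
  ∑ k ∈ range p, (binomPoly p k).eval x * (binomPoly p k).eval y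

theorem binomSum_comm (x y : ZMod (p ^ 2)) : binomSum p x y = binomSum p y x := by
  simp only [binomSum, mul_comm]

theorem binomSum_add_mul (x y s t : ZMod (p ^ 2)) :
    binomSum p (x + s * (p : ZMod (p ^ 2))) (y + t * (p : ZMod (p ^ 2))) =
      binomSum p x y + s * (binomSum p (x + p) y - binomSum p x y) +
        t * (binomSum p x (y + p) - binomSum p x y) := by
  obtain ⟨u, v, h⟩ := exists_sum_eval_mul_eval_add_mul (natCast_sq_eq_zero p) (range p)
    (binomPoly p) (binomPoly p) x y
  have h10 := h 1 0
  have h01 := h 0 1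
  simp only [one_mul, zero_mul, add_zero] at h10 h01
  simp only [binomSum]
  rw [h, h10, h01]
  ring

variable [Fact p.Prime]

theorem isUnit_natCast_factorial {k : ℕ} (hk : k < p) : IsUnit (k ! : ZMod (p ^ 2)) :=
  (ZMod.isUnit_iff_coprime _ _).2 <| Nat.Coprime.pow_right 2 <|
    (Nat.coprime_comm.1 <| (Nat.Prime.coprime_iff_not_dvd Fact.out).2 fun h =>
      (Nat.Prime.dvd_factorial Fact.out).1 h |>.not_gt hk)

theorem isUnit_two_of_ne_two (hp : p ≠ 2) : IsUnit (2 : ZMod (p ^ 2)) := by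
  exact_mod_cast (ZMod.isUnit_iff_coprime 2 (p ^ 2)).2 <| Nat.Coprime.pow_right 2 <|
    (Nat.coprime_primes Nat.prime_two Fact.out).2 (Ne.symm hp)

variable {p}

theorem binomPoly_eval_natCast {k : ℕ} (hk : k < p) (n : ℕ) :
    (binomPoly p k).eval (n : ZMod (p ^ 2)) = n.choose k := by
  rw [binomPoly, eval_mul, eval_C, descPochhammer_eval_eq_descFactorial,
    descFactorial_eq_factorial_mul_choose, Nat.cast_mul, ← mul_assoc,
    ZMod.inv_mul_of_unit _ (isUnit_natCast_factorial p hk), one_mul]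

theorem binomPoly_eval_neg_one {k : ℕ} (hk : k < p) : (binomPoly p k).eval (-1) = (-1) ^ k := by
  rw [binomPoly, eval_mul, eval_C, descPochhammer_eval_neg_one, mul_left_comm,
    ZMod.inv_mul_of_unit _ (isUnit_natCast_factorial p hk), mul_one]

theorem binomPoly_eval_mul_eval (hp : p ≠ 2) {k : ℕ} (hk : k < p) {x y : ZMod (p ^ 2)}
    (hx : 4 * x = -1) (hy : 4 * y = -3) :
    (binomPoly p k).eval x * (binomPoly p k).eval y =
      (2 * k).choose k * (4 * k).choose (2 * k) * ((64 : ZMod (p ^ 2)) ^ k)⁻¹ := by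
  have h64 : (64 : ZMod (p ^ 2)) ^ k * (64 ^ k)⁻¹ = 1 :=
    ZMod.mul_inv_of_unit _ <| (by norm_num : (2 : ZMod (p ^ 2)) ^ 6 = 64) ▸
      ((isUnit_two_of_ne_two p hp).pow 6).pow k
  have key := sixty_four_pow_mul_descPochhammer_eval_mul_eval hx hy k
  calc (binomPoly p k).eval x * (binomPoly p k).eval y
      = ((k ! : ZMod (p ^ 2))⁻¹ * k !) ^ 2 *
          ((2 * k).choose k * (4 * k).choose (2 * k) * (64 ^ k)⁻¹) := by
        simp only [binomPoly, eval_mul, eval_C]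
        linear_combination (-(k ! : ZMod (p ^ 2))⁻¹ ^ 2 * (descPochhammer _ k).eval x *
          (descPochhammer _ k).eval y) * h64 + ((k ! : ZMod (p ^ 2))⁻¹ ^ 2 * (64 ^ k)⁻¹) * key
    _ = _ := by rw [ZMod.inv_mul_of_unit _ (isUnit_natCast_factorial p hk), one_pow, one_mul]

theorem binomSum_natCast (n : ℕ) {m : ℕ} (hm : m < p) :
    binomSum p n m = (n + m).choose m := by
  rw [← sum_range_choose_mul_choose hm, binomSum, Nat.cast_sum]
  refine sum_congr rfl fun k hk => ?_
  rw [binomPoly_eval_natCast (mem_range.1 hk), binomPoly_eval_natCast (mem_range.1 hk),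
    Nat.cast_mul]

theorem cast_choose_two_mul_sub_one {d : ℕ} (hd : d < p) :
    ((2 * p - 1).choose d : ZMod (p ^ 2)) - (p - 1).choose d = (p - 1).choose d - (-1) ^ d := by
  have hp1 := (Fact.out : p.Prime).one_le
  have taylor (t : ZMod (p ^ 2)) :=
    eval_add_of_sq_eq_zero (binomPoly p d) (-1) (t * (p : ZMod (p ^ 2)))
      (by rw [mul_pow, natCast_sq_eq_zero, mul_zero])
  rw [← binomPoly_eval_natCast hd, ← binomPoly_eval_natCast hd, Nat.cast_sub (by omega),
    Nat.cast_sub hp1]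
  push_cast
  rw [show (2 * p - 1 : ZMod (p ^ 2)) = -1 + 2 * p by ring,
    show (p - 1 : ZMod (p ^ 2)) = -1 + 1 * p by ring, taylor 1, taylor 2,
    binomPoly_eval_neg_one hd]
  ring

theorem binomSum_add_prime_sub {n m : ℕ} (hnm : n + m + 1 = p) :
    binomSum p (n + p) m - binomSum p n m = binomSum p n m - (-1) ^ m := by
  rw [← Nat.cast_add, binomSum_natCast _ (by omega), binomSum_natCast _ (by omega),
    show n + p + m = 2 * p - 1 by omega, show n + m = p - 1 by omega]
  exact cast_choose_two_mul_sub_one (by omega)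

theorem binomSum_add_prime_sub_right (hp : p ≠ 2) {n m : ℕ} (hnm : n + m + 1 = p) :
    binomSum p n (m + p) - binomSum p n m = binomSum p n m - (-1) ^ m := by
  have hodd := (Nat.Prime.mod_two_eq_one_iff_ne_two Fact.out).2 hp
  rw [binomSum_comm p n, binomSum_comm p n, binomSum_add_prime_sub (by omega : m + n + 1 = p),
    neg_one_pow_eq_pow_mod_two, neg_one_pow_eq_pow_mod_two (n := m), show n % 2 = m % 2 by omega]

end ModPrimeSq

theorem legendreSym_neg_two_eq_neg_one_pow (p : ℕ) [Fact p.Prime] (hp : p ≠ 2) :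
    legendreSym p (-2) = (-1) ^ (p / 4) := by
  have hodd : p % 2 = 1 := (Nat.Prime.mod_two_eq_one_iff_ne_two Fact.out).2 hp
  rw [legendreSym.at_neg_two hp, ZMod.χ₈'_nat_eq_if_mod_eight, neg_one_pow_eq_pow_mod_two,
    if_neg (by omega)]
  rcases (by omega : p % 8 = 1 ∨ p % 8 = 3 ∨ p % 8 = 5 ∨ p % 8 = 7) with h | h | h | h <;>
    simp [h, show p / 4 % 2 = p % 8 / 4 by omega]

theorem exists_dvd_four_mul_add_one {p : ℕ} (hp : p % 2 = 1) :
    ∃ a b : ℕ, a + b + 1 = p ∧ p ∣ 4 * a + 1 ∧ b % 2 = p / 4 % 2 := by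
  rcases (by omega : p % 4 = 1 ∨ p % 4 = 3) with h | h
  · exact ⟨p / 4, 3 * (p / 4), by omega, ⟨1, by omega⟩, by omega⟩
  · exact ⟨3 * (p / 4) + 2, p / 4, by omega, ⟨3, by omega⟩, by omega⟩

theorem exists_four_mul_add_mul_eq (p : ℕ) [Fact p.Prime] (hp : p ≠ 2) :
    ∃ (a b : ℕ) (s : ZMod (p ^ 2)), a + b + 1 = p ∧ b % 2 = p / 4 % 2 ∧
      4 * ((a : ZMod (p ^ 2)) + s * (p : ZMod (p ^ 2))) = -1 ∧
      4 * ((b : ZMod (p ^ 2)) + (-1 - s) * (p : ZMod (p ^ 2))) = -3 := by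
  obtain ⟨a, b, hab, ⟨w, hw⟩, hb⟩ :=
    exists_dvd_four_mul_add_one ((Nat.Prime.mod_two_eq_one_iff_ne_two Fact.out).2 hp)
  have h4 : (4 : ZMod (p ^ 2)) * 4⁻¹ = 1 :=
    ZMod.mul_inv_of_unit _ ((by norm_num : (2 : ZMod (p ^ 2)) ^ 2 = 4) ▸
      (isUnit_two_of_ne_two p hp).pow 2)
  have hw' := congrArg (Nat.cast : ℕ → ZMod (p ^ 2)) hw
  have hab' := congrArg (Nat.cast : ℕ → ZMod (p ^ 2)) hab
  push_cast at hw' hab'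
  refine ⟨a, b, -((w : ZMod (p ^ 2)) * 4⁻¹), hab, hb, ?_, ?_⟩
  · linear_combination hw' - (p * w : ZMod (p ^ 2)) * h4
  · linear_combination 4 * hab' - hw' + (p * w : ZMod (p ^ 2)) * h4

theorem sum_binom_2k_4k (p : ℕ) [Fact p.Prime] (h3 : 3 < p) :
    ∑ k ∈ Finset.range p,
        ((Nat.choose (2*k) k : ZMod (p^2)) * (Nat.choose (4*k) (2*k) : ZMod (p^2))
          * ((64 : ZMod (p^2))^k)⁻¹)
      = (legendreSym p (-2) : ZMod (p^2)) := by
  have hp : p ≠ 2 := by omega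
  obtain ⟨a, b, s, hab, hb, hx, hy⟩ := exists_four_mul_add_mul_eq p hp
  calc _ = binomSum p (a + s * p) (b + (-1 - s) * p) :=
        sum_congr rfl fun k hk => (binomPoly_eval_mul_eval hp (mem_range.1 hk) hx hy).symm
    _ = (-1) ^ b := by
      rw [binomSum_add_mul]
      linear_combination s * binomSum_add_prime_sub hab +
        (-1 - s) * binomSum_add_prime_sub_right hp hab
    _ = _ := by
      rw [legendreSym_neg_two_eq_neg_one_pow p hp]
      push_cast
      rw [neg_one_pow_eq_pow_mod_two (n := p / 4), ← hb, ← neg_one_pow_eq_pow_mod_two]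
end

section
/- For any nonnegative integer k, binom(-1/4,k)·binom(-3/4,k) = binom(2k,k)·binom(4k,2k)/64^k. -/
/-- Generalized binomial coefficient for a rational `a`. -/
def qchoose (a : ℚ) (k : ℕ) : ℚ := (∏ i ∈ Finset.range k, (a - i)) / (Nat.factorial k)

/-!
By the duplication formula for falling factorials,
`binom(a, k) binom(a - 1/2, k) = binom(2a, 2k) binom(2k, k) / 4^k`; at `a = -1/4` this leaves
`binom(-1/2, 2k)`, and `binom(-1/2, n) = (-1/4)^n binom(2n, n)`.
-/

@[simp]
lemma qchoose_zero (a : ℚ) : qchoose a 0 = 1 := by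
  simp [qchoose]

lemma qchoose_succ (a : ℚ) (n : ℕ) :
    qchoose a (n + 1) = qchoose a n * (a - n) / (n + 1) := by
  simp only [qchoose, Finset.prod_range_succ, Nat.factorial_succ, Nat.cast_mul, Nat.cast_succ]
  field_simp

lemma centralBinom_succ_cast (n : ℕ) :
    ((n + 1).centralBinom : ℚ) = 2 * (2 * n + 1) / (n + 1) * n.centralBinom := by
  rw [div_mul_eq_mul_div, eq_div_iff (by positivity), mul_comm]
  exact_mod_cast Nat.succ_mul_centralBinom_succ n

lemma qchoose_mul_qchoose_sub_half (a : ℚ) (k : ℕ) :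
    qchoose a k * qchoose (a - 1 / 2) k = qchoose (2 * a) (2 * k) * k.centralBinom / 4 ^ k := by
  induction k with
  | zero => simp
  | succ n ih =>
    rw [show 2 * (n + 1) = 2 * n + 1 + 1 by ring, qchoose_succ, qchoose_succ, qchoose_succ,
      qchoose_succ, centralBinom_succ_cast, pow_succ]
    calc qchoose a n * (a - n) / (n + 1) * (qchoose (a - 1 / 2) n * (a - 1 / 2 - n) / (n + 1))
        = qchoose a n * qchoose (a - 1 / 2) n
            * ((a - n) / (n + 1) * ((a - 1 / 2 - n) / (n + 1))) := by
          ring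
      _ = _ := by
          rw [ih]
          push_cast
          field_simp
          ring

lemma qchoose_neg_half (n : ℕ) : qchoose (-1 / 2) n = (-1 / 4) ^ n * n.centralBinom := by
  induction n with
  | zero => simp
  | succ n ih =>
    rw [qchoose_succ, ih, centralBinom_succ_cast, pow_succ]
    field_simp
    ring

theorem qchoose_quarters (k : ℕ) :
    qchoose (-1/4) k * qchoose (-3/4) k
      = (Nat.choose (2*k) k : ℚ) * (Nat.choose (4*k) (2*k) : ℚ) / 64^k := by
  have hdup := qchoose_mul_qchoose_sub_half (-1 / 4) k
  rw [show (-1 / 4 : ℚ) - 1 / 2 = -3 / 4 by norm_num,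
    show (2 : ℚ) * (-1 / 4) = -1 / 2 by norm_num, qchoose_neg_half, pow_mul,
    show (-1 / 4 : ℚ) ^ 2 = 1 / 16 by norm_num] at hdup
  rw [hdup, Nat.centralBinom_eq_two_mul_choose, Nat.centralBinom_eq_two_mul_choose,
    show 2 * (2 * k) = 4 * k by ring, show (64 : ℚ) = 16 * 4 by norm_num, mul_pow, div_pow,
    one_pow]
  ring
end

section
/- Let p > 3 be a prime, r an integer with 1 ≤ r ≤ p-1 and r < p/2, and t a p-adic integer. Then binom(pt+r-1, (p-1)/2)·binom(-pt-r-1, (p-1)/2) ≡ pt/r + (p^2 t / r)(2q_p(2) + H_{(p-1)/2 - r}) - p^2 t^2 / r^2 (mod p^3), where q_p(2) = (2^(p-1) - 1)/p and H_n = 1 + 1/2 + ... + 1/n (with H_0 = 0). -/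
/-- `x ≡ y (mod p^n)` in the ring of `p`-integral rationals. -/
def pcong (p n : ℕ) (x y : ℚ) : Prop := ∃ z : ℚ, ¬ (p ∣ z.den) ∧ x - y = (p:ℚ)^n * z

/-- The harmonic number `H_n`, with `H_0 = 0`. -/
def harm (n : ℕ) : ℚ := ∑ i ∈ Finset.Icc 1 n, (i:ℚ)⁻¹

open Finset
open scoped Nat

notation:50 a:51 " ≡[" p:max " ^ " n:max "] " b:51 => pcong p n a b

def pIntegers (p : ℕ) [hp : Fact p.Prime] : Subring ℚ where
  carrier := {x | ¬ p ∣ x.den}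
  mul_mem' {x y} hx hy h := (hp.out.dvd_mul.1 (h.trans (Rat.mul_den_dvd x y))).elim hx hy
  one_mem' := by simpa using hp.out.ne_one
  add_mem' {x y} hx hy h := (hp.out.dvd_mul.1 (h.trans (Rat.add_den_dvd x y))).elim hx hy
  zero_mem' := by simpa using hp.out.ne_one
  neg_mem' {x} hx := by simpa using hx

namespace pIntegers

variable {p : ℕ} [hp : Fact p.Prime]

theorem inv_natCast_mem {k : ℕ} (hk : ¬ p ∣ k) : (k : ℚ)⁻¹ ∈ pIntegers p := by
  change ¬ p ∣ ((k : ℚ)⁻¹).den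
  rw [Rat.inv_natCast_den]
  split_ifs
  · simpa using hp.out.ne_one
  · exact hk

theorem inv_natCast_mem_of_lt {k : ℕ} (hk : 0 < k) (hkp : k < p) :
    (k : ℚ)⁻¹ ∈ pIntegers p :=
  inv_natCast_mem (Nat.not_dvd_of_pos_of_lt hk hkp)

theorem factorial_div_factorial_mem {a b : ℕ} (ha : a < p) :
    ((b ! : ℚ) / a !) ∈ pIntegers p := by
  rw [div_eq_mul_inv]
  exact mul_mem (natCast_mem _ _) (inv_natCast_mem (by rw [hp.out.dvd_factorial]; omega))

end pIntegers

namespace pcong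

variable {p : ℕ} [Fact p.Prime] {n : ℕ} {x y u v : ℚ}

theorem of_sub_eq {z : ℚ} (hz : z ∈ pIntegers p) (h : x - y = (p : ℚ) ^ n * z) :
    x ≡[p ^ n] y :=
  ⟨z, hz, h⟩

theorem of_eq (h : x = y) : x ≡[p ^ n] y := of_sub_eq (zero_mem _) (by simp [h])

@[refl] theorem refl (x : ℚ) : x ≡[p ^ n] x := of_eq rfl

theorem symm : x ≡[p ^ n] y → y ≡[p ^ n] x
  | ⟨z, hz, h⟩ => of_sub_eq (neg_mem hz) (by linear_combination -h)

theorem trans : x ≡[p ^ n] y → y ≡[p ^ n] u → x ≡[p ^ n] u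
  | ⟨z, hz, h⟩, ⟨w, hw, h'⟩ => of_sub_eq (add_mem hz hw) (by linear_combination h + h')

instance : Trans (pcong p n) (pcong p n) (pcong p n) := ⟨trans⟩

theorem add : x ≡[p ^ n] y → u ≡[p ^ n] v → x + u ≡[p ^ n] y + v
  | ⟨z, hz, h⟩, ⟨w, hw, h'⟩ => of_sub_eq (add_mem hz hw) (by linear_combination h + h')

theorem sub : x ≡[p ^ n] y → u ≡[p ^ n] v → x - u ≡[p ^ n] y - v
  | ⟨z, hz, h⟩, ⟨w, hw, h'⟩ => of_sub_eq (sub_mem hz hw) (by linear_combination h - h')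

theorem sum {ι : Type*} (s : Finset ι) {f g : ι → ℚ} (h : ∀ i ∈ s, f i ≡[p ^ n] g i) :
    ∑ i ∈ s, f i ≡[p ^ n] ∑ i ∈ s, g i := by
  choose! z hz hfg using h
  exact of_sub_eq (sum_mem hz) (by rw [← sum_sub_distrib, mul_sum]; exact sum_congr rfl hfg)

theorem mul_left {c : ℚ} (hc : c ∈ pIntegers p) : x ≡[p ^ n] y → c * x ≡[p ^ n] c * y
  | ⟨z, hz, h⟩ => of_sub_eq (mul_mem hc hz) (by linear_combination c * h)

theorem mul (hxy : x ≡[p ^ n] y) (huv : u ≡[p ^ n] v) (hy : y ∈ pIntegers p)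
    (hu : u ∈ pIntegers p) : x * u ≡[p ^ n] y * v := by
  obtain ⟨z, hz, h⟩ := hxy
  obtain ⟨w, hw, h'⟩ := huv
  exact of_sub_eq (add_mem (mul_mem hz hu) (mul_mem hy hw)) (by linear_combination u * h + y * h')

theorem mem (hxy : x ≡[p ^ n] y) (hy : y ∈ pIntegers p) : x ∈ pIntegers p := by
  obtain ⟨z, hz, h⟩ := hxy
  rw [sub_eq_iff_eq_add'.1 h]
  exact add_mem hy (mul_mem (pow_mem (natCast_mem _ p) n) hz)

theorem of_le {m : ℕ} (hmn : m ≤ n) : x ≡[p ^ n] y → x ≡[p ^ m] y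
  | ⟨z, hz, h⟩ => of_sub_eq (mul_mem (pow_mem (natCast_mem _ p) (n - m)) hz) (by
      rw [h, ← mul_assoc, ← pow_add, Nat.add_sub_cancel' hmn])

theorem p_pow_mul (k : ℕ) {c : ℚ} (hc : c ∈ pIntegers p) :
    x ≡[p ^ n] y → (p : ℚ) ^ k * c * x ≡[p ^ (n + k)] (p : ℚ) ^ k * c * y
  | ⟨z, hz, h⟩ => of_sub_eq (mul_mem hc hz) (by
      rw [pow_add]; linear_combination (p : ℚ) ^ k * c * h)

theorem cancel_p : (p : ℚ) * x ≡[p ^ (n + 1)] p * y → x ≡[p ^ n] y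
  | ⟨z, hz, h⟩ => of_sub_eq hz <|
      mul_left_cancel₀ (Nat.cast_ne_zero.2 (Fact.out : p.Prime).ne_zero) (by linear_combination h)

theorem mul_one_add {X Y C D a b : ℚ} (hX : X ≡[p ^ 2] C * (1 + p * a))
    (hY : Y ≡[p ^ 2] D * (1 + p * b)) (hC : C ∈ pIntegers p) (hD : D ∈ pIntegers p)
    (ha : a ∈ pIntegers p) (hb : b ∈ pIntegers p) :
    X * Y ≡[p ^ 2] C * D * (1 + p * (a + b)) := by
  have one_add_mem {c : ℚ} (hc : c ∈ pIntegers p) : 1 + p * c ∈ pIntegers p :=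
    add_mem (one_mem _) (mul_mem (natCast_mem _ p) hc)
  calc X * Y ≡[p ^ 2] C * (1 + p * a) * (D * (1 + p * b)) :=
        hX.mul hY (mul_mem hC (one_add_mem ha)) (hY.mem (mul_mem hD (one_add_mem hb)))
    _ ≡[p ^ 2] C * D * (1 + p * (a + b)) :=
        of_sub_eq (mul_mem (mul_mem (mul_mem hC hD) ha) hb) (by ring)

theorem p_mul_mul_one_add {t K a b S s : ℚ} (ht : t ∈ pIntegers p)
    (ha : a ∈ pIntegers p) (hb : b ∈ pIntegers p) (hS : S ∈ pIntegers p)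
    (hK : K ≡[p ^ 2] a + p * b) (hSs : S ≡[p ^ 1] s) :
    p * t * K * (1 + p * t * S) ≡[p ^ 3]
      p * t * a + p ^ 2 * t * b + p ^ 2 * t ^ 2 * (a * s) := by
  have hKa : K ≡[p ^ 1] a := (hK.of_le (by norm_num)).trans (of_sub_eq hb (by ring))
  calc p * t * K * (1 + p * t * S)
        = (p : ℚ) ^ 1 * t * K + (p : ℚ) ^ 2 * t ^ 2 * (K * S) := by ring
    _ ≡[p ^ 3] (p : ℚ) ^ 1 * t * (a + p * b) + (p : ℚ) ^ 2 * t ^ 2 * (a * s) :=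
        (hK.p_pow_mul 1 ht).add ((hKa.mul hSs ha hS).p_pow_mul 2 (pow_mem ht 2))
    _ = p * t * a + p ^ 2 * t * b + p ^ 2 * t ^ 2 * (a * s) := by ring

end pcong

@[simp] theorem harm_zero : harm 0 = 0 := rfl

theorem harm_succ (n : ℕ) : harm (n + 1) = harm n + ((n + 1 : ℕ) : ℚ)⁻¹ :=
  sum_Icc_succ_top (by omega) _

theorem harm_add_sub_harm (a n : ℕ) :
    harm (a + n) - harm a = ∑ i ∈ range n, ((a + i + 1 : ℕ) : ℚ)⁻¹ := by
  induction n with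
  | zero => simp
  | succ n ih =>
    rw [← add_assoc, harm_succ, sum_range_succ, ← ih]
    ring

theorem sum_range_neg_one_pow_mul_inv (M : ℕ) :
    ∑ k ∈ range (2 * M), (-1) ^ k * ((k + 1 : ℕ) : ℚ)⁻¹ = harm (2 * M) - harm M := by
  induction M with
  | zero => simp
  | succ M ih =>
    rw [show 2 * (M + 1) = 2 * M + 1 + 1 by ring, sum_range_succ, sum_range_succ, ih,
      harm_succ, harm_succ, harm_succ, pow_succ, (even_two_mul M).neg_one_pow]
    push_cast
    field_simp
    ring

theorem prod_range_natCast_add (a n : ℕ) :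
    ∏ i ∈ range n, ((a + i + 1 : ℕ) : ℚ) = (a + n)! / a ! := by
  rw [eq_div_iff (by positivity), ← Nat.cast_prod, mul_comm, ← Nat.cast_mul]
  simp_rw [add_right_comm a _ 1]
  rw [← Nat.ascFactorial_eq_prod_range, Nat.factorial_mul_ascFactorial]

theorem sum_range_choose_succ {n : ℕ} (hn : 1 ≤ n) :
    ∑ k ∈ range (n - 1), (n.choose (k + 1) : ℚ) = 2 ^ n - 2 := by
  have h := Nat.sum_range_choose n
  rw [sum_range_succ, ← Nat.sub_add_cancel hn, sum_range_succ', Nat.sub_add_cancel hn] at h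
  simp only [Nat.choose_zero_right, Nat.choose_self] at h
  have := congrArg (Nat.cast : ℕ → ℚ) h
  push_cast at this
  linarith

theorem prod_range_add_sub_eq (x : ℚ) {r M : ℕ} (hr : 1 ≤ r) (hrM : r ≤ M) :
    ∏ i ∈ range M, (x + r - 1 - i) =
      (x * ∏ i ∈ range (r - 1), (x + (i + 1 : ℕ))) *
        ((-1) ^ (M - r) * ∏ i ∈ range (M - r), (-x + (i + 1 : ℕ))) := by
  rw [← Nat.add_sub_cancel' hrM, prod_range_add, Nat.add_sub_cancel_left]
  congr 1
  · calc ∏ i ∈ range r, (x + r - 1 - i) = ∏ i ∈ range r, (x + (r - 1 - i : ℕ)) :=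
          prod_congr rfl fun i hi => by
            push_cast [Nat.cast_sub (show i ≤ r - 1 by simp at hi; omega), Nat.cast_sub hr]
            ring
      _ = ∏ i ∈ range r, (x + i) := prod_range_reflect (fun i => x + (i : ℚ)) r
      _ = x * ∏ i ∈ range (r - 1), (x + (i + 1 : ℕ)) := by
          rw [← Nat.sub_add_cancel hr, prod_range_succ', Nat.add_sub_cancel]
          push_cast
          ring
  · rw [show (-1 : ℚ) ^ (M - r) = (-1) ^ #(range (M - r)) by rw [card_range], ← prod_neg]
    refine prod_congr rfl fun i _ => ?_
    push_cast
    ring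

theorem prod_range_neg_sub_eq (x : ℚ) (r M : ℕ) :
    ∏ i ∈ range M, (-x - r - 1 - i) =
      (-1) ^ M * ∏ i ∈ range M, (x + (r + i + 1 : ℕ)) := by
  rw [show (-1 : ℚ) ^ M = (-1) ^ #(range M) by rw [card_range], ← prod_neg]
  refine prod_congr rfl fun i _ => ?_
  push_cast
  ring

theorem qchoose_mul_qchoose_eq (x : ℚ) {r M : ℕ} (hr : 1 ≤ r) (hrM : r ≤ M) :
    qchoose (x + r - 1) M * qchoose (-x - r - 1) M =
      (-1) ^ r * x * (∏ i ∈ range (r - 1), (x + (i + 1 : ℕ))) *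
        (∏ i ∈ range (M - r), (-x + (i + 1 : ℕ))) *
          (∏ i ∈ range M, (x + (r + i + 1 : ℕ))) / (M ! : ℚ) ^ 2 := by
  have hsign : (-1 : ℚ) ^ (M - r) * (-1) ^ M = (-1) ^ r := by
    rw [← pow_add, show M - r + M = r + 2 * (M - r) by omega, pow_add, pow_mul]
    simp
  simp only [qchoose, prod_range_add_sub_eq x hr hrM, prod_range_neg_sub_eq]
  rw [← hsign]
  ring

theorem prod_range_natCast_sub_eq {p r M : ℕ} (hM : 2 * M + 1 = p) (hrM : r ≤ M) :
    ∏ i ∈ range r, (((M - r + i + 1 : ℕ) : ℚ) - p) = (-1) ^ r * ((M + r)! / M !) := by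
  rw [← prod_range_natCast_add, ← prod_range_reflect (fun i => ((M + i + 1 : ℕ) : ℚ)),
    show (-1 : ℚ) ^ r = (-1) ^ #(range r) by rw [card_range], ← prod_neg]
  refine prod_congr rfl fun i hi => ?_
  have hsum : M - r + i + 1 + (M + (r - 1 - i) + 1) = p := by simp at hi; omega
  have := congrArg (Nat.cast : ℕ → ℚ) hsum
  push_cast at this ⊢
  linarith

section

variable {p : ℕ} [hp : Fact p.Prime]

theorem harm_mem {n : ℕ} (hn : n < p) : harm n ∈ pIntegers p :=
  sum_mem fun j hj =>
    pIntegers.inv_natCast_mem_of_lt (by simp at hj; omega) (by simp at hj; omega)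

theorem prod_one_add_p_mul_cong {ι : Type*} (s : Finset ι) {a : ι → ℚ}
    (ha : ∀ i ∈ s, a i ∈ pIntegers p) :
    ∏ i ∈ s, (1 + p * a i) ≡[p ^ 2] 1 + p * ∑ i ∈ s, a i := by
  classical
  induction s using Finset.induction_on with
  | empty => simp [pcong.refl]
  | @insert b s hb ih =>
    rw [prod_insert hb, sum_insert hb]
    have hab : a b ∈ pIntegers p := ha b (mem_insert_self b s)
    have hs : ∑ i ∈ s, a i ∈ pIntegers p := sum_mem fun i hi => ha i (mem_insert_of_mem hi)
    calc (1 + p * a b) * ∏ i ∈ s, (1 + p * a i)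
        ≡[p ^ 2] (1 + p * a b) * (1 + p * ∑ i ∈ s, a i) :=
          (ih fun i hi => ha i (mem_insert_of_mem hi)).mul_left
            (add_mem (one_mem _) (mul_mem (natCast_mem _ p) hab))
      _ ≡[p ^ 2] 1 + p * (a b + ∑ i ∈ s, a i) := pcong.of_sub_eq (mul_mem hab hs) (by ring)

theorem prod_p_mul_add_cong {ι : Type*} (s : Finset ι) (c : ι → ℕ)
    (hc : ∀ i ∈ s, ¬ p ∣ c i) {t : ℚ} (ht : t ∈ pIntegers p) :
    ∏ i ∈ s, (p * t + c i) ≡[p ^ 2]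
      (∏ i ∈ s, (c i : ℚ)) * (1 + p * (t * ∑ i ∈ s, (c i : ℚ)⁻¹)) := by
  have hfactor : ∏ i ∈ s, (p * t + c i) =
      (∏ i ∈ s, (c i : ℚ)) * ∏ i ∈ s, (1 + p * (t * (c i : ℚ)⁻¹)) := by
    rw [← prod_mul_distrib]
    refine prod_congr rfl fun i hi => ?_
    have : (c i : ℚ) ≠ 0 := Nat.cast_ne_zero.2 fun h => hc i hi (h ▸ dvd_zero p)
    field_simp
    ring
  rw [hfactor, mul_sum]
  exact (prod_one_add_p_mul_cong s fun i hi => mul_mem ht (pIntegers.inv_natCast_mem (hc i hi))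
    ).mul_left (prod_mem fun i _ => natCast_mem _ _)

theorem prod_range_p_mul_add_cong {a n : ℕ} (h : a + n < p) {t : ℚ} (ht : t ∈ pIntegers p) :
    ∏ i ∈ range n, (p * t + (a + i + 1 : ℕ)) ≡[p ^ 2]
      (a + n)! / a ! * (1 + p * (t * (harm (a + n) - harm a))) := by
  rw [harm_add_sub_harm, ← prod_range_natCast_add]
  exact prod_p_mul_add_cong _ _ (fun i hi => Nat.not_dvd_of_pos_of_lt (by omega)
    (by simp at hi; omega)) ht

theorem harm_sub_harm_cong_zero {a n : ℕ} (h : 2 * a + n + 1 = p) (hp2 : p ≠ 2) :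
    harm (a + n) - harm a ≡[p ^ 1] 0 := by
  set u : ℕ → ℚ := fun i => ((a + i + 1 : ℕ) : ℚ)
  have hu : ∀ i ∈ range n, u i ≠ 0 := fun i _ => by positivity
  -- the reflection `i ↦ n - 1 - i` sends `u i` to `p - u i`
  have hpair : ∀ i ∈ range n,
      (u i)⁻¹ + (u (n - 1 - i))⁻¹ = p * ((u i)⁻¹ * (u (n - 1 - i))⁻¹) := by
    intro i hi
    have hsum : (p : ℚ) = u i + u (n - 1 - i) := by
      simp only [u]; norm_cast; simp at hi; omega
    have := hu (n - 1 - i) (by simp at hi ⊢; omega)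
    rw [hsum]
    field_simp [hu i hi]
    ring
  have h2 : (2 : ℚ)⁻¹ ∈ pIntegers p := by
    exact_mod_cast pIntegers.inv_natCast_mem (p := p) (k := 2)
      (fun hd => hp2 ((Nat.prime_dvd_prime_iff_eq hp.out Nat.prime_two).1 hd))
  refine pcong.of_sub_eq (z := 2⁻¹ * ∑ i ∈ range n, (u i)⁻¹ * (u (n - 1 - i))⁻¹)
    (mul_mem h2 (sum_mem fun i hi => mul_mem ?_ ?_)) ?_
  · exact pIntegers.inv_natCast_mem_of_lt (by omega) (by simp at hi; omega)
  · exact pIntegers.inv_natCast_mem_of_lt (by omega) (by simp at hi; omega)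
  · rw [harm_add_sub_harm, sub_zero, pow_one, ← mul_assoc, mul_comm (p : ℚ), mul_assoc,
      mul_sum, ← sum_congr rfl hpair, sum_add_distrib, sum_range_reflect (fun i => (u i)⁻¹) n]
    ring

theorem choose_pred_modEq {k : ℕ} (hk : k ≤ p - 1) :
    ((p - 1).choose k : ℤ) ≡ (-1) ^ k [ZMOD p] := by
  induction k with
  | zero => simp
  | succ k ih =>
    have hpascal : ((p - 1).choose (k + 1) : ℤ) = p.choose (k + 1) - (p - 1).choose k := by
      have := Nat.choose_succ_succ (p - 1) k
      rw [Nat.succ_eq_add_one, Nat.sub_add_cancel hp.out.one_le] at this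
      rw [this]
      push_cast
      ring
    have hdvd : (p.choose (k + 1) : ℤ) ≡ 0 [ZMOD p] := Int.modEq_zero_iff_dvd.2
      (Int.natCast_dvd_natCast.2 (hp.out.dvd_choose_self (by omega) (by omega)))
    rw [hpascal, pow_succ, mul_neg_one, ← zero_sub]
    exact hdvd.sub (ih (by omega))

theorem choose_prime_cong {k : ℕ} (hk : k < p - 1) :
    (p.choose (k + 1) : ℚ) ≡[p ^ 2] p * ((-1) ^ k * ((k + 1 : ℕ) : ℚ)⁻¹) := by
  obtain ⟨z, hz⟩ := (choose_pred_modEq (p := p) hk.le).dvd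
  have hz' : ((p - 1).choose k : ℚ) = (-1) ^ k - p * z := by
    have := congrArg (Int.cast : ℤ → ℚ) hz
    push_cast at this
    linarith
  have hmul : (p : ℚ) * (p - 1).choose k = p.choose (k + 1) * (k + 1 : ℕ) := by
    have := Nat.add_one_mul_choose_eq (p - 1) k
    rw [Nat.sub_add_cancel hp.out.one_le] at this
    exact_mod_cast this
  have hk0 : ((k + 1 : ℕ) : ℚ) ≠ 0 := by positivity
  refine pcong.of_sub_eq (z := -z * ((k + 1 : ℕ) : ℚ)⁻¹) (mul_mem (neg_mem (intCast_mem _ z))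
    (pIntegers.inv_natCast_mem_of_lt (by omega) (by omega))) ?_
  rw [eq_div_iff hk0 |>.2 hmul.symm, hz']
  field_simp
  ring

theorem fermatQuotient_two_mem (hp2 : p ≠ 2) : ((2 : ℚ) ^ (p - 1) - 1) / p ∈ pIntegers p := by
  have hcop : IsCoprime ((2 : ℕ) : ℤ) p :=
    Nat.isCoprime_iff_coprime.2 ((Nat.coprime_primes Nat.prime_two hp.out).2 hp2.symm)
  obtain ⟨k, hk⟩ := (Int.ModEq.pow_card_sub_one_eq_one hp.out hcop).symm.dvd
  have hkQ : (2 : ℚ) ^ (p - 1) - 1 = p * k := by exact_mod_cast hk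
  rw [hkQ, mul_div_cancel_left₀ _ (Nat.cast_ne_zero.2 hp.out.ne_zero)]
  exact intCast_mem _ k

theorem harm_half_cong {M : ℕ} (hM : 2 * M + 1 = p) :
    harm M ≡[p ^ 1] -(2 * (((2 : ℚ) ^ (p - 1) - 1) / p)) := by
  set q := ((2 : ℚ) ^ (p - 1) - 1) / p
  have hpq : (p : ℚ) * (2 * q) = ∑ k ∈ range (p - 1), (p.choose (k + 1) : ℚ) := by
    have hp0 : (p : ℚ) ≠ 0 := Nat.cast_ne_zero.2 hp.out.ne_zero
    rw [sum_range_choose_succ hp.out.one_le, ← pow_sub_one_mul hp.out.ne_zero]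
    simp only [q]
    field_simp
  have h2q : 2 * q ≡[p ^ 1] harm (2 * M) - harm M := by
    refine pcong.cancel_p ?_
    rw [hpq, ← sum_range_neg_one_pow_mul_inv, mul_sum, show p - 1 = 2 * M by omega]
    exact pcong.sum _ fun k hk => choose_prime_cong (by simp at hk; omega)
  have hH : harm (2 * M) ≡[p ^ 1] 0 := by
    simpa using harm_sub_harm_cong_zero (a := 0) (n := 2 * M) (by omega) (by omega)
  calc harm M = harm (2 * M) - (harm (2 * M) - harm M) := by ring
    _ ≡[p ^ 1] 0 - 2 * q := hH.sub h2q.symm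
    _ = -(2 * q) := zero_sub _

theorem prod_shifts_cong {r M : ℕ} (h : r + M < p) {t : ℚ}
    (ht : t ∈ pIntegers p) :
    (∏ i ∈ range (r - 1), (p * t + (i + 1 : ℕ))) *
        (∏ i ∈ range (M - r), (-(p * t) + (i + 1 : ℕ))) *
          ∏ i ∈ range M, (p * t + (r + i + 1 : ℕ)) ≡[p ^ 2]
      (r - 1)! * (M - r)! * ((r + M)! / r !) *
        (1 + p * (t * (harm (r - 1) - harm (M - r) + (harm (r + M) - harm r)))) := by
  have hcoef {s : ℚ} (hs : s ∈ pIntegers p) {a n : ℕ} (h : a + n < p) :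
      s * (harm (a + n) - harm a) ∈ pIntegers p :=
    mul_mem hs (sub_mem (harm_mem h) (harm_mem (by omega)))
  have hfac {a b : ℕ} (ha : a < p) := pIntegers.factorial_div_factorial_mem (p := p) (b := b) ha
  have h12 := (prod_range_p_mul_add_cong (a := 0) (n := r - 1) (by omega) ht).mul_one_add
    (prod_range_p_mul_add_cong (a := 0) (n := M - r) (by omega) (neg_mem ht))
    (hfac hp.out.pos) (hfac hp.out.pos) (hcoef ht (by omega)) (hcoef (neg_mem ht) (by omega))
  have h123 := h12.mul_one_add (prod_range_p_mul_add_cong (a := r) (n := M) h ht)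
    (mul_mem (hfac hp.out.pos) (hfac hp.out.pos)) (hfac (by omega))
    (add_mem (hcoef ht (by omega)) (hcoef (neg_mem ht) (by omega))) (hcoef ht h)
  simp only [zero_add, mul_neg] at h123
  refine h123.trans (pcong.of_eq ?_)
  simp only [Nat.factorial_zero, Nat.cast_one, div_one, harm_zero, sub_zero]
  ring

theorem leading_coeff_cong {r M : ℕ} (hM : 2 * M + 1 = p) (hr : 1 ≤ r) (hrM : r ≤ M) :
    (-1) ^ r * ((r - 1)! * (M - r)! * ((r + M)! / r !)) / (M ! : ℚ) ^ 2 ≡[p ^ 2]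
      (r : ℚ)⁻¹ +
        p * ((r : ℚ)⁻¹ * (2 * (((2 : ℚ) ^ (p - 1) - 1) / p) + harm (M - r))) := by
  set q := ((2 : ℚ) ^ (p - 1) - 1) / p
  have hD : ∏ i ∈ range r, (((M - r + i + 1 : ℕ) : ℚ) - p) ≡[p ^ 2]
      M ! / (M - r)! * (1 - p * (harm M - harm (M - r))) := by
    simpa only [Nat.sub_add_cancel hrM, mul_neg, mul_one, neg_one_mul, neg_add_eq_sub,
      ← sub_eq_add_neg] using
      prod_range_p_mul_add_cong (p := p) (a := M - r) (n := r) (by omega) (neg_mem (one_mem _))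
  have hH : harm (M - r) - harm M ≡[p ^ 1] 2 * q + harm (M - r) :=
    ((pcong.refl _).sub (harm_half_cong hM)).trans (pcong.of_eq (by ring))
  have hr' : (r : ℚ)⁻¹ ∈ pIntegers p := pIntegers.inv_natCast_mem_of_lt (by omega) (by omega)
  have hr0 : (r : ℚ) ≠ 0 := by positivity
  have hfac : (r : ℚ) * (r - 1)! = r ! := by exact_mod_cast Nat.mul_factorial_pred (by omega)
  calc (-1) ^ r * ((r - 1)! * (M - r)! * ((r + M)! / r !)) / (M ! : ℚ) ^ 2
      = (r : ℚ)⁻¹ * ((M - r)! / M !) *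
          ∏ i ∈ range r, (((M - r + i + 1 : ℕ) : ℚ) - p) := by
        rw [prod_range_natCast_sub_eq hM hrM, ← hfac, add_comm r M]
        field_simp
    _ ≡[p ^ 2] (r : ℚ)⁻¹ * ((M - r)! / M !) *
          (M ! / (M - r)! * (1 - p * (harm M - harm (M - r)))) :=
        hD.mul_left (mul_mem hr' (pIntegers.factorial_div_factorial_mem (by omega)))
    _ = (r : ℚ)⁻¹ + (p : ℚ) ^ 1 * (r : ℚ)⁻¹ * (harm (M - r) - harm M) := by
        field_simp
        ring
    _ ≡[p ^ (1 + 1)] (r : ℚ)⁻¹ + (p : ℚ) ^ 1 * (r : ℚ)⁻¹ * (2 * q + harm (M - r)) :=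
        (pcong.refl _).add (hH.p_pow_mul 1 hr')
    _ = (r : ℚ)⁻¹ + p * ((r : ℚ)⁻¹ * (2 * q + harm (M - r))) := by ring

theorem sum_inv_shifts_cong {r M : ℕ} (hM : 2 * M + 1 = p) (hr : 1 ≤ r) (hrM : r ≤ M) :
    harm (r - 1) - harm (M - r) + (harm (r + M) - harm r) ≡[p ^ 1] -(r : ℚ)⁻¹ := by
  have hsym := harm_sub_harm_cong_zero (p := p) (a := M - r) (n := 2 * r) (by omega) (by omega)
  rw [show M - r + 2 * r = r + M by omega] at hsym
  have hsucc : harm r = harm (r - 1) + (r : ℚ)⁻¹ := by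
    simpa [Nat.sub_add_cancel hr] using harm_succ (r - 1)
  calc harm (r - 1) - harm (M - r) + (harm (r + M) - harm r)
      = harm (r + M) - harm (M - r) - (r : ℚ)⁻¹ := by rw [hsucc]; ring
    _ ≡[p ^ 1] 0 - (r : ℚ)⁻¹ := hsym.sub (pcong.refl _)
    _ = -(r : ℚ)⁻¹ := zero_sub _

theorem qchoose_mul_qchoose_cong {r M : ℕ} (hr : 1 ≤ r) (hrM : r ≤ M) (h : r + M < p)
    {t : ℚ} (ht : t ∈ pIntegers p) :
    qchoose (p * t + r - 1) M * qchoose (-(p * t) - r - 1) M ≡[p ^ 3]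
      p * t * ((-1) ^ r * ((r - 1)! * (M - r)! * ((r + M)! / r !)) / (M ! : ℚ) ^ 2) *
        (1 + p * t * (harm (r - 1) - harm (M - r) + (harm (r + M) - harm r))) := by
  have hc : (-1) ^ r * t * ((M ! : ℚ)⁻¹) ^ 2 ∈ pIntegers p :=
    mul_mem (mul_mem (pow_mem (neg_mem (one_mem _)) r) ht) (pow_mem
      (pIntegers.inv_natCast_mem (by rw [hp.out.dvd_factorial]; omega)) 2)
  rw [qchoose_mul_qchoose_eq _ hr hrM]
  refine (pcong.of_eq ?_).trans (((prod_shifts_cong h ht).p_pow_mul 1 hc).trans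
    (pcong.of_eq ?_)) <;> ring

end

theorem key_lemma_small_r_general (p : ℕ) (hp : p.Prime)
    (r : ℕ) (hr1 : 1 ≤ r) (hr : 2*r < p)
    (t : ℚ) (ht : ¬ (p ∣ t.den)) :
    pcong p 3
      (qchoose ((p:ℚ)*t + r - 1) ((p-1)/2) * qchoose (-((p:ℚ)*t) - r - 1) ((p-1)/2))
      ((p:ℚ)*t/r
        + (p:ℚ)^2*t/r * (2*(((2:ℚ)^(p-1) - 1)/p) + harm ((p-1)/2 - r))
        - (p:ℚ)^2*t^2/r^2) := by
  have : Fact p.Prime := ⟨hp⟩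
  set M := (p - 1) / 2
  have hM : 2 * M + 1 = p := by obtain ⟨m, hm⟩ := hp.odd_of_ne_two (by omega); omega
  have hrM : r ≤ M := by omega
  have ht' : t ∈ pIntegers p := ht
  have hr' : (r : ℚ)⁻¹ ∈ pIntegers p := pIntegers.inv_natCast_mem_of_lt (by omega) (by omega)
  have hH {n : ℕ} (hn : n ≤ p - 1) : harm n ∈ pIntegers p := harm_mem (by omega)
  refine (qchoose_mul_qchoose_cong hr1 hrM (by omega) ht').trans
    (((leading_coeff_cong hM hr1 hrM).p_mul_mul_one_add ht' hr' ?_ ?_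
      (sum_inv_shifts_cong hM hr1 hrM)).trans (pcong.of_eq ?_))
  · exact mul_mem hr' (add_mem (mul_mem (natCast_mem _ 2) (fermatQuotient_two_mem (by omega)))
      (hH (by omega)))
  · exact add_mem (sub_mem (hH (by omega)) (hH (by omega)))
      (sub_mem (hH (by omega)) (hH (by omega)))
  · field_simp
    ring

theorem key_lemma_small_r (p : ℕ) (hp : p.Prime) (h3 : 3 < p)
    (r : ℕ) (hr1 : 1 ≤ r) (hr2 : r ≤ p - 1) (hr : 2*r < p)
    (t : ℚ) (ht : ¬ (p ∣ t.den)) :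
    pcong p 3
      (qchoose ((p:ℚ)*t + r - 1) ((p-1)/2) * qchoose (-((p:ℚ)*t) - r - 1) ((p-1)/2))
      ((p:ℚ)*t/r
        + (p:ℚ)^2*t/r * (2*(((2:ℚ)^(p-1) - 1)/p) + harm ((p-1)/2 - r))
        - (p:ℚ)^2*t^2/r^2) :=
  key_lemma_small_r_general p hp r hr1 hr t ht
end

section
/- Let p > 3 be a prime, a ∈ Z_p, a ≢ 0 (mod p), with ⟨a⟩_p ≤ (p-1)/2. Then sum_{k=0}^{(p-1)/2} binom(a,k)·binom(-1-a,k) ≡ sum_{k=0}^{p-1} binom(a,k)·(-2)^k (mod p^2). -/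
/-!
Multiplying the difference of the two sides by `(p-1)!²` turns it into `F(a)` for an integer
polynomial `F` of degree `< p`. At a natural number `n < p` both sums are explicit: the binomial
theorem gives `∑ binom(n,k) (-2)^k = (-1)^n`, Chu–Vandermonde gives
`∑_{k ≤ n} binom(n,k) binom(-1-n,k) = binom(-1,n) = (-1)^n`, and the terms with
`(p-1)/2 < k ≤ n` are divisible by `p` since `binom(-1-n,k) = ± binom(n+k,k)` and `p ≤ n + k`.
So `F` vanishes modulo `p` at every residue, hence `F = p G`; and for `n₀ = ⟨a⟩_p ≤ (p-1)/2`
the truncation is invisible, so `F(n₀) = 0` and `G(n₀) = 0`. Therefore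
`F(a) = p (G(a) - G(n₀))` is divisible by `p (a - n₀)`, that is, by `p²`.
-/

open Finset Polynomial Nat

section pIntegral

variable (p : ℕ) [hp : Fact p.Prime]

def pIntegralRat : Subring ℚ where
  carrier := {x | ¬ p ∣ x.den}
  mul_mem' {x y} hx hy h := (hp.out.dvd_mul.mp (h.trans (Rat.mul_den_dvd x y))).elim hx hy
  one_mem' := hp.out.not_dvd_one
  add_mem' {x y} hx hy h := (hp.out.dvd_mul.mp (h.trans (Rat.add_den_dvd x y))).elim hx hy
  zero_mem' := hp.out.not_dvd_one
  neg_mem' {x} hx := by simpa using hx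

variable {p}

theorem mem_pIntegralRat {x : ℚ} : x ∈ pIntegralRat p ↔ ¬ p ∣ x.den := Iff.rfl

theorem inv_natCast_mem_pIntegralRat {d : ℕ} (hd : ¬ p ∣ d) : (d : ℚ)⁻¹ ∈ pIntegralRat p := by
  rw [mem_pIntegralRat, Rat.inv_natCast_den]
  split_ifs
  · exact hp.out.not_dvd_one
  · exact hd

theorem pcong_of_natCast_mul_eq {n u : ℕ} {x y w : ℚ} (hu : ¬ p ∣ u) (hw : w ∈ pIntegralRat p)
    (h : u * (x - y) = p ^ n * w) : pcong p n x y := by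
  have hu0 : (u : ℚ) ≠ 0 := Nat.cast_ne_zero.mpr fun hu0 ↦ hu (hu0 ▸ dvd_zero p)
  refine ⟨w * (u : ℚ)⁻¹, mul_mem hw (inv_natCast_mem_pIntegralRat hu), ?_⟩
  rw [← mul_assoc, ← h, mul_comm, inv_mul_cancel_left₀ hu0]

theorem natCast_dvd_sub_natCast_of_cast_eq (x : pIntegralRat p) (n : ℕ)
    (h : ((x : ℚ) : ZMod p) = n) : (p : pIntegralRat p) ∣ x - n := by
  obtain ⟨x, hx⟩ := x
  have hden : (x.den : ZMod p) ≠ 0 := by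
    rwa [ne_eq, ZMod.natCast_eq_zero_iff]
  obtain ⟨j, hj⟩ : (p : ℤ) ∣ x.num - n * x.den := by
    rw [← ZMod.intCast_zmod_eq_zero_iff_dvd]
    push_cast
    rw [← h, Rat.cast_def, div_mul_cancel₀ _ hden, sub_self]
  refine ⟨⟨j * (x.den : ℚ)⁻¹, mul_mem (intCast_mem _ j) (inv_natCast_mem_pIntegralRat hx)⟩, ?_⟩
  ext
  change x - n = p * (j * (x.den : ℚ)⁻¹)
  have hj' : (x.num : ℚ) - n * x.den = p * j := by exact_mod_cast hj
  rw [← mul_assoc, ← hj', sub_mul, mul_inv_cancel_right₀ (by positivity), ← div_eq_mul_inv,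
    Rat.num_div_den]

end pIntegral

namespace Polynomial

variable {p : ℕ} [hp : Fact p.Prime]

theorem C_natCast_dvd_of_dvd_eval {f : ℤ[X]} (hdeg : f.natDegree < p)
    (hf : ∀ n < p, (p : ℤ) ∣ f.eval (n : ℤ)) : C (p : ℤ) ∣ f := by
  have hmap : f.map (Int.castRingHom (ZMod p)) = 0 := by
    refine eq_zero_of_natDegree_lt_card_of_eval_eq_zero _ Function.injective_id (fun x ↦ ?_)
      (natDegree_map_le.trans_lt (by rwa [ZMod.card]))
    rw [id, ← ZMod.natCast_zmod_val x, eval_natCast_map, eq_intCast,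
      ZMod.intCast_zmod_eq_zero_iff_dvd]
    exact hf _ (ZMod.val_lt x)
  refine (C_dvd_iff_dvd_coeff _ _).mpr fun i ↦ ?_
  rw [← ZMod.intCast_zmod_eq_zero_iff_dvd, ← eq_intCast (Int.castRingHom (ZMod p)), ← coeff_map,
    hmap, coeff_zero]

theorem sq_natCast_dvd_aeval_of_dvd_sub {R : Type*} [CommRing R] {f : ℤ[X]}
    (hdeg : f.natDegree < p) (hf : ∀ n < p, (p : ℤ) ∣ f.eval (n : ℤ)) {n₀ : ℕ}
    (h₀ : f.eval (n₀ : ℤ) = 0) {x : R} (hx : (p : R) ∣ x - n₀) : (p : R) ^ 2 ∣ aeval x f := by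
  obtain ⟨g, rfl⟩ := C_natCast_dvd_of_dvd_eval hdeg hf
  have hg : g.eval (n₀ : ℤ) = 0 := by simpa [hp.out.ne_zero] using h₀
  have hgx : x - n₀ ∣ aeval x g := by
    have := sub_dvd_eval_sub x n₀ (g.map (algebraMap ℤ R))
    rwa [eval_natCast_map, hg, map_zero, sub_zero, eval_map_algebraMap] at this
  rw [map_mul, aeval_C, sq, algebraMap_int_eq, eq_intCast, Int.cast_natCast]
  exact mul_dvd_mul_left _ (hx.trans hgx)

end Polynomial

theorem sum_range_choose_mul_of_lt {M : Type*} [NonAssocSemiring M] (f : ℕ → M) {n N : ℕ}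
    (h : n < N) :
    ∑ k ∈ range N, (n.choose k : M) * f k = ∑ k ∈ range (n + 1), (n.choose k : M) * f k := by
  refine (sum_subset (range_subset_range.mpr h) fun k _ hk ↦ ?_).symm
  rw [choose_eq_zero_of_lt (by simpa using hk), Nat.cast_zero, zero_mul]

section BinomialRing

variable {R : Type*} [CommRing R] [BinomialRing R]

theorem sum_range_choose_mul_neg_two_pow {n N : ℕ} (h : n < N) :
    ∑ k ∈ range N, Ring.choose (n : R) k * (-2) ^ k = (-1) ^ n := by
  have binomial := add_pow (-2 : R) 1 n
  simp only [one_pow, mul_one, show (-2 : R) + 1 = -1 by norm_num] at binomial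
  simp_rw [Ring.choose_natCast]
  rw [sum_range_choose_mul_of_lt _ h, binomial]
  exact sum_congr rfl fun k _ ↦ mul_comm _ _

theorem Ring.choose_neg_one_sub_natCast (n k : ℕ) :
    Ring.choose (-1 - n : R) k = (-1) ^ k * (n + k).choose k := by
  rw [show (-1 - n : R) = -((n + 1 : ℕ) : R) by push_cast; ring, Ring.choose_neg,
    show ((n + 1 : ℕ) : R) + k - 1 = ((n + k : ℕ) : R) by push_cast; ring, Ring.choose_natCast,
    Units.smul_def, Int.coe_negOnePow_natCast, zsmul_eq_mul, Int.cast_pow, Int.cast_neg,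
    Int.cast_one]

theorem Ring.choose_neg_one (n : ℕ) : Ring.choose (-1 : R) n = (-1) ^ n := by
  simpa using Ring.choose_neg_one_sub_natCast (R := R) 0 n

theorem sum_range_choose_mul_choose_neg_one_sub {n N : ℕ} (h : n < N) :
    ∑ k ∈ range N, Ring.choose (n : R) k * Ring.choose (-1 - n : R) k = (-1) ^ n := by
  have vandermonde := Ring.add_choose_eq n (Commute.all (n : R) (-1 - n))
  rw [add_sub_cancel, Ring.choose_neg_one, ← Nat.sum_antidiagonal_swap,
    Nat.sum_antidiagonal_eq_sum_range_succ_mk] at vandermonde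
  simp_rw [Ring.choose_natCast] at vandermonde ⊢
  rw [sum_range_choose_mul_of_lt _ h, vandermonde]
  refine sum_congr rfl fun k hk ↦ ?_
  rw [Prod.swap_prod_mk, choose_symm (Nat.lt_succ_iff.mp (mem_range.mp hk))]

theorem sum_choose_mul_choose_neg_one_sub_sub_sum_choose_mul_neg_two_pow {m N n : ℕ}
    (hm : m < N) (hn : n < N) :
    ∑ k ∈ range (m + 1), Ring.choose (n : R) k * Ring.choose (-1 - n : R) k
        - ∑ k ∈ range N, Ring.choose (n : R) k * (-2) ^ k
      = -∑ k ∈ Ico (m + 1) N, Ring.choose (n : R) k * Ring.choose (-1 - n : R) k := by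
  rw [sum_range_choose_mul_neg_two_pow hn, ← sum_range_choose_mul_choose_neg_one_sub hn,
    ← sum_range_add_sum_Ico _ hm]
  ring

end BinomialRing

theorem Nat.Prime.dvd_choose_mul_choose_neg_one_sub {p n k : ℕ} (hp : p.Prime)
    (hk : (p - 1) / 2 < k) (hkp : k < p) (hn : n < p) :
    (p : ℤ) ∣ Ring.choose (n : ℤ) k * Ring.choose (-1 - n : ℤ) k := by
  rcases lt_or_ge n k with hnk | hkn
  · simp [Ring.choose_natCast, choose_eq_zero_of_lt hnk]
  · have : p ∣ (n + k).choose k := add_comm k n ▸ hp.dvd_choose_add hkp hn (by omega)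
    rw [Ring.choose_neg_one_sub_natCast]
    exact dvd_mul_of_dvd_right (dvd_mul_of_dvd_right (Int.natCast_dvd_natCast.mpr this) _) _

noncomputable def scaledBinomialPoly (N k : ℕ) : ℤ[X] :=
  C ((N ! / k ! : ℕ) : ℤ) * descPochhammer ℤ k

theorem aeval_scaledBinomialPoly {R : Type*} [CommRing R] [BinomialRing R] {N k : ℕ}
    (hk : k ≤ N) (x : R) : aeval x (scaledBinomialPoly N k) = N ! * Ring.choose x k := by
  rw [scaledBinomialPoly, map_mul, aeval_C, aeval_eq_smeval,
    Ring.descPochhammer_eq_factorial_smul_choose, nsmul_eq_mul, ← mul_assoc, algebraMap_int_eq,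
    eq_intCast, Int.cast_natCast, ← Nat.cast_mul, Nat.div_mul_cancel (factorial_dvd_factorial hk)]

theorem natDegree_scaledBinomialPoly_le (N k : ℕ) : (scaledBinomialPoly N k).natDegree ≤ k :=
  natDegree_C_mul_le _ _ |>.trans (descPochhammer_natDegree ℤ k).le

noncomputable def diffPoly (m N : ℕ) : ℤ[X] :=
  ∑ k ∈ range (m + 1), scaledBinomialPoly (N - 1) k * (scaledBinomialPoly (N - 1) k).comp (-1 - X)
    - C ((N - 1)! : ℤ) * ∑ k ∈ range N, C ((-2) ^ k) * scaledBinomialPoly (N - 1) k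

theorem aeval_diffPoly {R : Type*} [CommRing R] [BinomialRing R] {m N : ℕ} (hm : m < N)
    (x : R) :
    aeval x (diffPoly m N) = ((N - 1)! : R) ^ 2 *
      (∑ k ∈ range (m + 1), Ring.choose x k * Ring.choose (-1 - x) k
        - ∑ k ∈ range N, Ring.choose x k * (-2) ^ k) := by
  have hk : ∀ k ∈ range N, k ≤ N - 1 := fun k hk ↦ Nat.le_sub_one_of_lt (mem_range.mp hk)
  simp only [diffPoly, map_sub, map_mul, map_sum, aeval_comp, mul_sub, mul_sum]
  congr 1
  · refine sum_congr rfl fun k hk' ↦ ?_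
    have hkN : k ≤ N - 1 := hk k (range_subset_range.mpr (by omega) hk')
    simp only [aeval_scaledBinomialPoly hkN, map_neg, map_one, aeval_X]
    ring
  · refine sum_congr rfl fun k hk' ↦ ?_
    simp only [aeval_scaledBinomialPoly (hk k hk'), map_natCast, map_pow, map_neg, map_ofNat]
    ring

theorem natDegree_diffPoly_lt {m N : ℕ} (h : 2 * m < N) : (diffPoly m N).natDegree < N := by
  have hX : (-1 - X : ℤ[X]).natDegree ≤ 1 := by compute_degree
  refine Nat.lt_of_le_sub_one (by omega) ((natDegree_sub_le_of_le ?_ ?_).trans (max_self _).le)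
  · refine natDegree_sum_le_of_forall_le _ _ fun k hk ↦ natDegree_mul_le.trans ?_
    have hcomp := (natDegree_comp_le (p := scaledBinomialPoly (N - 1) k) (q := -1 - X)).trans
      (Nat.mul_le_mul (natDegree_scaledBinomialPoly_le (N - 1) k) hX)
    have := natDegree_scaledBinomialPoly_le (N - 1) k
    rw [mem_range] at hk
    omega
  · refine natDegree_C_mul_le _ _ |>.trans <| natDegree_sum_le_of_forall_le _ _ fun k hk ↦ ?_
    refine natDegree_C_mul_le _ _ |>.trans <| (natDegree_scaledBinomialPoly_le (N - 1) k).trans ?_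
    rw [mem_range] at hk
    omega

theorem Nat.Prime.dvd_eval_diffPoly {p n : ℕ} (hp : p.Prime) (hn : n < p) :
    (p : ℤ) ∣ (diffPoly ((p - 1) / 2) p).eval (n : ℤ) := by
  rw [← coe_aeval_eq_eval, aeval_diffPoly (by omega),
    sum_choose_mul_choose_neg_one_sub_sub_sum_choose_mul_neg_two_pow (by omega) hn]
  refine dvd_mul_of_dvd_right (dvd_neg.mpr (dvd_sum fun k hk ↦ ?_)) _
  rw [mem_Ico] at hk
  exact hp.dvd_choose_mul_choose_neg_one_sub (by omega) hk.2 hn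

theorem eval_diffPoly_eq_zero {m N n : ℕ} (hn : n ≤ m) (hm : m < N) :
    (diffPoly m N).eval (n : ℤ) = 0 := by
  rw [← coe_aeval_eq_eval, aeval_diffPoly hm,
    sum_choose_mul_choose_neg_one_sub_sub_sum_choose_mul_neg_two_pow hm (by omega),
    sum_eq_zero fun k hk ↦ ?_, neg_zero, mul_zero]
  rw [mem_Ico] at hk
  rw [Ring.choose_natCast, choose_eq_zero_of_lt (by omega), Nat.cast_zero, zero_mul]

theorem qchoose_eq_ringChoose (a : ℚ) (k : ℕ) : qchoose a k = Ring.choose a k := by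
  rw [qchoose, Ring.choose_eq_smul, ← aeval_eq_smeval, aeval_def, eval₂_eq_eval_map,
    descPochhammer_map, descPochhammer_eval_eq_prod_range, smul_eq_mul, div_eq_inv_mul]

theorem thm_3_1_small_general (p : ℕ) [Fact p.Prime]
    (a : ℚ) (ha : ¬ (p ∣ a.den))
    (hv : ((a : ZMod p)).val ≤ (p-1)/2) :
    pcong p 2
      (∑ k ∈ Finset.range ((p-1)/2 + 1), qchoose a k * qchoose (-1-a) k)
      (∑ k ∈ Finset.range p, qchoose a k * (-2:ℚ)^k) := by
  have hp : p.Prime := Fact.out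
  have hp2 := hp.two_le
  let x : pIntegralRat p := ⟨a, ha⟩
  have hx : (p : pIntegralRat p) ∣ x - (a : ZMod p).val :=
    natCast_dvd_sub_natCast_of_cast_eq x _ (ZMod.natCast_zmod_val _).symm
  obtain ⟨w, hw⟩ := sq_natCast_dvd_aeval_of_dvd_sub (natDegree_diffPoly_lt (by omega))
    (fun n hn ↦ hp.dvd_eval_diffPoly hn) (eval_diffPoly_eq_zero hv (by omega)) hx
  have hfac : ¬ p ∣ (p - 1)! ^ 2 := fun h ↦
    hp.dvd_factorial.not.mpr (by omega) (hp.dvd_of_dvd_pow h)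
  refine pcong_of_natCast_mul_eq hfac w.2 ?_
  have hcoe : ((aeval x (diffPoly ((p - 1) / 2) p) : pIntegralRat p) : ℚ) =
      aeval a (diffPoly ((p - 1) / 2) p) :=
    (aeval_algHom_apply (pIntegralRat p).subtype.toIntAlgHom x _).symm
  rw [hw, aeval_diffPoly (by omega)] at hcoe
  simp only [qchoose_eq_ringChoose]
  push_cast at hcoe ⊢
  exact hcoe.symm

theorem thm_3_1_small (p : ℕ) [Fact p.Prime] (h3 : 3 < p)
    (a : ℚ) (ha : ¬ (p ∣ a.den)) (ha0 : (a : ZMod p) ≠ 0)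
    (hv : ((a : ZMod p)).val ≤ (p-1)/2) :
    pcong p 2
      (∑ k ∈ Finset.range ((p-1)/2 + 1), qchoose a k * qchoose (-1-a) k)
      (∑ k ∈ Finset.range p, qchoose a k * (-2:ℚ)^k) :=
  thm_3_1_small_general p a ha hv
end
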